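/- arXiv:2212.02496 — 13 statements merged into one kernel-verified Lean document; each statement's English description precedes it below -/
import Mathlib

section
/- For natural numbers a1 < a2 < ... < an, the set {x ∈ [0, 2π] : all cos(ai x) > 0 or all cos(ai x) < 0} has measure at least π/an; equivalently, P(a1,...,an) ≥ 1/(2 an). -/
open MeasureTheory Real Set

/-- The cosine sign correlation: the normalized measure of the set of `x ∈ [0, 2π]`
where all `cos (aᵢ x)` are positive or all are negative. -/
noncomputable def cosP (n : ℕ) (a : Fin n → ℕ) : ℝ :=
  (volume {x : ℝ | x ∈ Icc 0 (2 * π) ∧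
    ((∀ i, 0 < Real.cos (a i * x)) ∨ (∀ i, Real.cos (a i * x) < 0))}).toReal / (2 * π)

/-! With `m = max aᵢ`, all `cos (aᵢ x)` are positive as soon as `|x| < π / (2m)`, and by
`2π`-periodicity also when `x` is that close to `2π`. So the set contains both end pieces of
`[0, 2π]` of length `π / (2m)`, of total length `π / m`. -/

def cosSignSet (n : ℕ) (a : Fin n → ℕ) : Set ℝ :=
  {x : ℝ | x ∈ Icc 0 (2 * π) ∧
    ((∀ i, 0 < Real.cos (a i * x)) ∨ (∀ i, Real.cos (a i * x) < 0))}

theorem cosP_eq (n : ℕ) (a : Fin n → ℕ) :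
    cosP n a = (volume (cosSignSet n a)).toReal / (2 * π) := rfl

theorem cos_mul_pos_of_abs_lt {c m x : ℝ} (hm : 0 < m) (hc : |c| ≤ m)
    (hx : |x| < π / (2 * m)) : 0 < cos (c * x) := by
  have hcx : |c * x| < π / 2 :=
    calc |c * x| = |c| * |x| := abs_mul c x
      _ ≤ m * |x| := by gcongr
      _ < m * (π / (2 * m)) := by gcongr
      _ = π / 2 := by field_simp
  exact cos_pos_of_mem_Ioo (abs_lt.mp hcx)

theorem cos_natCast_mul_pos_of_abs_sub_two_pi_lt {k m : ℕ} {x : ℝ} (hm : 0 < m) (hk : k ≤ m)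
    (hx : |x - 2 * π| < π / (2 * m)) : 0 < cos (k * x) := by
  rw [← cos_sub_nat_mul_two_pi, ← mul_sub]
  exact cos_mul_pos_of_abs_lt (by exact_mod_cast hm) (by simpa using hk) hx

theorem volume_Ico_union_Ioc_two_pi {ε : ℝ} (hε : 0 ≤ ε) (hεπ : ε ≤ π) :
    volume (Ico 0 ε ∪ Ioc (2 * π - ε) (2 * π)) = ENNReal.ofReal (2 * ε) := by
  have hdisj : Disjoint (Ico 0 ε) (Ioc (2 * π - ε) (2 * π)) :=
    disjoint_left.mpr fun x hx hx' => by linarith [hx.2, hx'.1]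
  rw [measure_union hdisj measurableSet_Ioc, Real.volume_Ico, Real.volume_Ioc,
    ← ENNReal.ofReal_add (by linarith) (by linarith)]
  ring_nf

theorem Ico_union_Ioc_subset_cosSignSet {n m : ℕ} {a : Fin n → ℕ} (hm : 0 < m)
    (ha : ∀ i, a i ≤ m) :
    Ico 0 (π / (2 * m)) ∪ Ioc (2 * π - π / (2 * m)) (2 * π) ⊆ cosSignSet n a := by
  have hε : π / (2 * m) ≤ π := div_le_self pi_pos.le (by norm_cast; omega)
  rintro x (⟨hx0, hx⟩ | ⟨hx, hx2π⟩)
  · refine ⟨⟨hx0, by linarith⟩, Or.inl fun i => ?_⟩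
    refine cos_mul_pos_of_abs_lt (m := m) (by exact_mod_cast hm) (by simpa using ha i) ?_
    rwa [abs_of_nonneg hx0]
  · refine ⟨⟨by linarith, hx2π⟩, Or.inl fun i => ?_⟩
    refine cos_natCast_mul_pos_of_abs_sub_two_pi_lt hm (ha i) ?_
    rw [abs_sub_lt_iff]
    constructor <;> linarith

theorem volume_cosSignSet_ne_top (n : ℕ) (a : Fin n → ℕ) : volume (cosSignSet n a) ≠ ⊤ :=
  ne_top_of_le_ne_top (by simp [Real.volume_Icc, ENNReal.mul_eq_top])
    (measure_mono fun _ hx => hx.1)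

theorem pi_div_le_toReal_volume_cosSignSet {n m : ℕ} {a : Fin n → ℕ} (ha : ∀ i, a i ≤ m) :
    π / m ≤ (volume (cosSignSet n a)).toReal := by
  rcases Nat.eq_zero_or_pos m with rfl | hm
  · simp
  have hε : 0 ≤ π / (2 * m) := by positivity
  calc π / m = (ENNReal.ofReal (2 * (π / (2 * m)))).toReal := by
        rw [ENNReal.toReal_ofReal (by positivity)]
        field_simp
    _ ≤ (volume (cosSignSet n a)).toReal := by
        refine ENNReal.toReal_mono (volume_cosSignSet_ne_top n a) ?_
        rw [← volume_Ico_union_Ioc_two_pi hε (div_le_self pi_pos.le (by norm_cast; omega))]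
        exact measure_mono (Ico_union_Ioc_subset_cosSignSet hm ha)

theorem stmt_0_general (n : ℕ) (a : Fin (n + 1) → ℕ) (hmono : StrictMono a) :
    cosP (n + 1) a ≥ 1 / (2 * (a (Fin.last n) : ℝ)) := by
  have hvol := pi_div_le_toReal_volume_cosSignSet fun i => hmono.monotone (Fin.le_last i)
  rw [ge_iff_le, cosP_eq]
  calc 1 / (2 * (a (Fin.last n) : ℝ)) = π / a (Fin.last n) / (2 * π) := by
        field_simp
    _ ≤ _ := by gcongr

theorem stmt_0 (n : ℕ) (a : Fin (n + 1) → ℕ) (hpos : ∀ i, 0 < a i) (hmono : StrictMono a) :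
    cosP (n + 1) a ≥ 1 / (2 * (a (Fin.last n) : ℝ)) :=
  stmt_0_general n a hmono
end

section
/- P(1, 3, 9) = 1/9. -/
open MeasureTheory Real Set

private lemma cosShift (y c : ℝ) (n : ℕ) (h : c = n * (2 * π)) :
    Real.cos (y - c) = Real.cos y := by
  rw [h]; exact Real.cos_sub_nat_mul_two_pi y n

/-- if cos y > 0 and y ∈ [0, 2π] then y < π/2 or 3π/2 < y -/
private lemma posRange {y : ℝ} (h2 : y ≤ 2 * π) (hc : 0 < Real.cos y) :
    y < π / 2 ∨ 3 * π / 2 < y := by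
  by_contra h
  push_neg at h
  have := Real.cos_nonpos_of_pi_div_two_le_of_le h.1 (by linarith [h.2])
  linarith

/-- if cos y < 0 and y ∈ [0, 2π] then π/2 < y < 3π/2 -/
private lemma negRange {y : ℝ} (h0 : -(π / 2) ≤ y) (h2 : y ≤ 5 * π / 2) (hc : Real.cos y < 0) :
    π / 2 < y ∧ y < 3 * π / 2 := by
  have hπ := Real.pi_pos
  constructor
  · by_contra h
    push_neg at h
    have := Real.cos_nonneg_of_mem_Icc (x := y) ⟨h0, h⟩
    linarith
  · by_contra h
    push_neg at h
    have he : Real.cos (y - 2 * π) = Real.cos y := cosShift y (2 * π) 1 (by push_cast; ring)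
    have := Real.cos_nonneg_of_mem_Icc (x := y - 2 * π) ⟨by linarith, by linarith⟩
    rw [he] at this
    linarith

theorem stmt_2 : cosP 3 ![1, 3, 9] = 1 / 9 := by
  have hπ := Real.pi_pos
  have hset : {x : ℝ | x ∈ Icc 0 (2 * π) ∧
      ((∀ i, 0 < Real.cos ((![1, 3, 9] : Fin 3 → ℕ) i * x)) ∨
        (∀ i, Real.cos ((![1, 3, 9] : Fin 3 → ℕ) i * x) < 0))} =
      Ico 0 (π / 18) ∪ Ioo (17 * π / 18) (19 * π / 18) ∪ Ioc (35 * π / 18) (2 * π) := by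
    ext x
    simp only [Set.mem_setOf_eq, Set.mem_Icc, Set.mem_union, Set.mem_Ico, Set.mem_Ioo,
      Set.mem_Ioc]
    constructor
    · rintro ⟨⟨hx0, hx2⟩, hcase⟩
      rcases hcase with hpos | hneg
      · have h1 : 0 < Real.cos x := by simpa using hpos 0
        have h3 : 0 < Real.cos (3 * x) := by simpa using hpos 1
        have h9 : 0 < Real.cos (9 * x) := by simpa using hpos 2
        rcases posRange hx2 h1 with hA | hB
        · -- x < π/2; show x ∈ [0, π/18)
          left; left
          refine ⟨hx0, ?_⟩
          rcases posRange (by linarith) h3 with h3a | h3b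
          · rcases posRange (by linarith) h9 with h9a | h9b
            · linarith
            · linarith
          · linarith
        · -- 3π/2 < x ≤ 2π
          right
          refine ⟨?_, hx2⟩
          have he3 : Real.cos (3 * x - 4 * π) = Real.cos (3 * x) :=
            cosShift (3 * x) (4 * π) 2 (by push_cast; ring)
          have h3' : 0 < Real.cos (3 * x - 4 * π) := by rw [he3]; exact h3
          rcases posRange (by linarith) h3' with h3a | h3b
          · linarith
          · have he9 : Real.cos (9 * x - 16 * π) = Real.cos (9 * x) :=
              cosShift (9 * x) (16 * π) 8 (by push_cast; ring)
            have h9' : 0 < Real.cos (9 * x - 16 * π) := by rw [he9]; exact h9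
            rcases posRange (by linarith) h9' with h9a | h9b
            · linarith
            · linarith
      · have h1 : Real.cos x < 0 := by simpa using hneg 0
        have h3 : Real.cos (3 * x) < 0 := by simpa using hneg 1
        have h9 : Real.cos (9 * x) < 0 := by simpa using hneg 2
        left; right
        obtain ⟨hx1, hx1'⟩ := negRange (by linarith) (by linarith) h1
        have he3 : Real.cos (3 * x - 2 * π) = Real.cos (3 * x) :=
          cosShift (3 * x) (2 * π) 1 (by push_cast; ring)
        have h3' : Real.cos (3 * x - 2 * π) < 0 := by rw [he3]; exact h3
        obtain ⟨h3a, h3b⟩ := negRange (by linarith) (by linarith) h3'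
        -- 5π/6 < x < 7π/6
        have he9 : Real.cos (9 * x - 8 * π) = Real.cos (9 * x) :=
          cosShift (9 * x) (8 * π) 4 (by push_cast; ring)
        have h9' : Real.cos (9 * x - 8 * π) < 0 := by rw [he9]; exact h9
        obtain ⟨h9a, h9b⟩ := negRange (by linarith) (by linarith) h9'
        constructor <;> linarith
    · intro hx
      rcases hx with (⟨hx0, hx1⟩ | ⟨hx0, hx1⟩) | ⟨hx0, hx1⟩
      · refine ⟨⟨hx0, by linarith⟩, Or.inl ?_⟩
        intro i
        fin_cases i <;> simp <;>
          exact Real.cos_pos_of_mem_Ioo ⟨by linarith, by linarith⟩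
      · refine ⟨⟨by linarith, by linarith⟩, Or.inr ?_⟩
        intro i
        fin_cases i <;> simp
        · exact Real.cos_neg_of_pi_div_two_lt_of_lt (by linarith) (by linarith)
        · have he : Real.cos (3 * x - 2 * π) = Real.cos (3 * x) :=
            cosShift (3 * x) (2 * π) 1 (by push_cast; ring)
          rw [← he]
          exact Real.cos_neg_of_pi_div_two_lt_of_lt (by linarith) (by linarith)
        · have he : Real.cos (9 * x - 8 * π) = Real.cos (9 * x) :=
            cosShift (9 * x) (8 * π) 4 (by push_cast; ring)
          rw [← he]
          exact Real.cos_neg_of_pi_div_two_lt_of_lt (by linarith) (by linarith)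
      · refine ⟨⟨by linarith, hx1⟩, Or.inl ?_⟩
        intro i
        fin_cases i <;> simp
        · have he : Real.cos (x - 2 * π) = Real.cos x :=
            cosShift x (2 * π) 1 (by push_cast; ring)
          rw [← he]
          exact Real.cos_pos_of_mem_Ioo ⟨by linarith, by linarith⟩
        · have he : Real.cos (3 * x - 6 * π) = Real.cos (3 * x) :=
            cosShift (3 * x) (6 * π) 3 (by push_cast; ring)
          rw [← he]
          exact Real.cos_pos_of_mem_Ioo ⟨by linarith, by linarith⟩
        · have he : Real.cos (9 * x - 18 * π) = Real.cos (9 * x) :=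
            cosShift (9 * x) (18 * π) 9 (by push_cast; ring)
          rw [← he]
          exact Real.cos_pos_of_mem_Ioo ⟨by linarith, by linarith⟩
  unfold cosP
  rw [hset]
  have hd1 : Disjoint (Ico (0:ℝ) (π / 18)) (Ioo (17 * π / 18) (19 * π / 18)) := by
    apply Set.disjoint_left.mpr
    rintro x ⟨_, h1⟩ ⟨h2, _⟩
    linarith
  have hd2 : Disjoint (Ico (0:ℝ) (π / 18) ∪ Ioo (17 * π / 18) (19 * π / 18))
      (Ioc (35 * π / 18) (2 * π)) := by
    apply Set.disjoint_left.mpr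
    rintro x (⟨_, h1⟩ | ⟨_, h1⟩) ⟨h2, _⟩ <;> linarith
  rw [measure_union hd2 measurableSet_Ioc,
    measure_union hd1 measurableSet_Ioo,
    Real.volume_Ico, Real.volume_Ioo, Real.volume_Ioc,
    ← ENNReal.ofReal_add (by linarith) (by linarith),
    ← ENNReal.ofReal_add (by linarith) (by linarith),
    ENNReal.toReal_ofReal (by linarith)]
  rw [show π / 18 - 0 + (19 * π / 18 - 17 * π / 18) + (2 * π - 35 * π / 18) = 2 * π / 9 by ring]
  field_simp
end

section
/- For every n ≥ 1, P(1, 3, 9, ..., 3^{n-1}) = 1/3^{n-1}; i.e., for the geometric sequence ai = 3^{i-1}, the set where all cos(3^{i-1} x), 1 ≤ i ≤ n, have the same strict sign has measure 2π/3^{n-1}. -/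
open MeasureTheory Real Set

lemma cos_pos_iff' (x : ℝ) : 0 < Real.cos x ↔ ∃ k : ℤ, |x - 2*π*k| < π/2 := by
  constructor
  · intro h
    refine ⟨round (x / (2*π)), ?_⟩
    set k := round (x / (2*π)) with hk
    have h2π : (0:ℝ) < 2*π := by positivity
    have hb := abs_sub_round (x / (2*π))
    rw [abs_sub_le_iff] at hb
    have e1 : (x / (2*π) - k) * (2*π) ≤ (1/2) * (2*π) :=
      mul_le_mul_of_nonneg_right hb.1 h2π.le
    have e2 : ((k:ℝ) - x / (2*π)) * (2*π) ≤ (1/2) * (2*π) :=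
      mul_le_mul_of_nonneg_right hb.2 h2π.le
    have hx : x / (2*π) * (2*π) = x := div_mul_cancel₀ _ (ne_of_gt h2π)
    have hxb : |x - 2*π*k| ≤ π := by
      rw [abs_sub_le_iff]
      constructor <;> nlinarith [e1, e2, hx]
    by_contra hc
    push_neg at hc
    have hcos : Real.cos (x - 2*π*k) = Real.cos x := by
      have : x - 2*π*k = x - k * (2*π) := by ring
      rw [this, Real.cos_sub_int_mul_two_pi]
    have hle : Real.cos |x - 2*π*k| ≤ 0 :=
      Real.cos_nonpos_of_pi_div_two_le_of_le hc (by linarith [pi_pos])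
    rw [Real.cos_abs, hcos] at hle
    linarith
  · rintro ⟨k, hk⟩
    have hcos : Real.cos (x - 2*π*k) = Real.cos x := by
      have : x - 2*π*k = x - k * (2*π) := by ring
      rw [this, Real.cos_sub_int_mul_two_pi]
    rw [← hcos]
    apply Real.cos_pos_of_mem_Ioo
    rw [abs_lt] at hk
    constructor <;> [linarith [hk.1]; linarith [hk.2]]

lemma pos_iff (n : ℕ) : ∀ x : ℝ, (∀ i : Fin (n+1), 0 < Real.cos ((3^(i:ℕ) : ℕ) * x)) ↔
    ∃ k : ℤ, |x - 2*π*k| < π/(2*3^n) := by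
  induction n with
  | zero =>
    intro x
    have hc : ∀ i : Fin 1, ((3^(i:ℕ) : ℕ) : ℝ) * x = x := by
      intro i; fin_cases i; norm_num
    constructor
    · intro h
      have := (cos_pos_iff' x).mp (by simpa [hc 0] using h 0)
      simpa using this
    · rintro ⟨k, hk⟩ i
      rw [hc i]
      exact (cos_pos_iff' x).mpr ⟨k, by simpa using hk⟩
  | succ n ih =>
    intro x
    have h3n : (1:ℝ) ≤ 3^n := one_le_pow₀ (by norm_num)
    have hεle : π/(2*3^n) ≤ π/2 := by
      rw [div_le_div_iff₀ (by positivity) (by norm_num)]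
      nlinarith [pi_pos]
    have hpow : π/(2*3^(n+1)) = (π/(2*3^n))/3 := by
      rw [pow_succ]; ring
    constructor
    · intro h
      have h0 : 0 < Real.cos x := by simpa using h 0
      have h1 : ∀ i : Fin (n+1), 0 < Real.cos ((3^(i:ℕ) : ℕ) * (3*x)) := by
        intro i
        have hmem := h i.succ
        have hc : ((3^((i.succ : Fin (n+2)) : ℕ) : ℕ) : ℝ) * x = ((3^(i:ℕ) : ℕ) : ℝ) * (3*x) := by
          push_cast [Fin.val_succ]; ring
        rwa [hc] at hmem
      obtain ⟨k, hk⟩ := (ih (3*x)).mp h1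
      obtain ⟨m, hm⟩ := (cos_pos_iff' x).mp h0
      have hkm : k = 3*m := by
        have h1' : |(k:ℝ) - 3*m| < 1 := by
          rw [abs_lt] at hk hm ⊢
          constructor <;> nlinarith [pi_pos, hk.1, hk.2, hm.1, hm.2, hεle]
        have hcast : ((k - 3*m : ℤ) : ℝ) = (k:ℝ) - 3*(m:ℝ) := by push_cast; ring
        have h2 : |k - 3*m| < (1:ℤ) := by
          have : |((k - 3*m : ℤ) : ℝ)| < 1 := by rw [hcast]; exact h1'
          exact_mod_cast this
        rw [abs_lt] at h2
        omega
      refine ⟨m, ?_⟩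
      rw [hpow]
      rw [abs_lt] at hk ⊢
      subst hkm
      push_cast at hk
      constructor <;> [linarith [hk.1]; linarith [hk.2]]
    · rintro ⟨k, hk⟩ i
      rw [hpow] at hk
      refine Fin.cases ?_ ?_ i
      · have hlt : |x - 2*π*k| < π/2 := by
          have : (π/(2*3^n))/3 ≤ π/2 := by linarith [div_le_self (by positivity : (0:ℝ) ≤ π/(2*3^n)) (by norm_num : (1:ℝ) ≤ 3), hεle]
          linarith
        have := (cos_pos_iff' x).mpr ⟨k, hlt⟩
        simpa using this
      · intro j
        have hk' : |3*x - 2*π*(3*k : ℤ)| < π/(2*3^n) := by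
          rw [abs_lt] at hk ⊢
          push_cast
          constructor <;> [linarith [hk.1]; linarith [hk.2]]
        have hmem := (ih (3*x)).mpr ⟨3*k, hk'⟩ j
        have hc : ((3^((j.succ : Fin (n+2)) : ℕ) : ℕ) : ℝ) * x = ((3^(j:ℕ) : ℕ) : ℝ) * (3*x) := by
          push_cast [Fin.val_succ]; ring
        rwa [← hc] at hmem

lemma neg_iff (n : ℕ) (x : ℝ) : (∀ i : Fin (n+1), Real.cos ((3^(i:ℕ) : ℕ) * x) < 0) ↔
    ∃ k : ℤ, |x + π - 2*π*k| < π/(2*3^n) := by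
  rw [← pos_iff n (x + π)]
  apply forall_congr'
  intro i
  have hodd : Odd (3^(i:ℕ)) := Odd.pow ⟨1, by norm_num⟩
  obtain ⟨j, hj⟩ := hodd
  have h3 : ((3:ℝ))^(i:ℕ) = 2*(j:ℝ)+1 := by exact_mod_cast hj
  have key : Real.cos (((3^(i:ℕ) : ℕ) : ℝ) * (x + π)) = -Real.cos (((3^(i:ℕ) : ℕ) : ℝ) * x) := by
    have heq : ((3^(i:ℕ) : ℕ) : ℝ) * (x + π) = (((3^(i:ℕ) : ℕ) : ℝ) * x + π) + ((j:ℤ) : ℝ) * (2*π) := by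
      push_cast
      rw [h3]; ring
    rw [heq, Real.cos_add_int_mul_two_pi, Real.cos_add_pi]
  rw [key]
  constructor <;> intro h <;> linarith

theorem stmt_3 (n : ℕ) (hn : 1 ≤ n) :
    cosP n (fun i => 3 ^ (i : ℕ)) = 1 / 3 ^ (n - 1) := by
  obtain ⟨m, rfl⟩ : ∃ m, n = m + 1 := ⟨n - 1, by omega⟩
  simp only [Nat.add_sub_cancel]
  set ε := π/(2*3^m) with hε
  have h3m : (1:ℝ) ≤ 3^m := one_le_pow₀ (by norm_num)
  have hεpos : 0 < ε := by positivity
  have hεle : ε ≤ π/2 := by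
    rw [hε, div_le_div_iff₀ (by positivity) (by norm_num)]
    nlinarith [pi_pos]
  have hpi := pi_pos
  have hset : {x : ℝ | x ∈ Icc 0 (2 * π) ∧
      ((∀ i : Fin (m+1), 0 < Real.cos (((3:ℕ) ^ (i:ℕ) : ℕ) * x)) ∨
       (∀ i : Fin (m+1), Real.cos (((3:ℕ) ^ (i:ℕ) : ℕ) * x) < 0))} =
      Ico 0 ε ∪ (Ioo (π-ε) (π+ε) ∪ Ioc (2*π-ε) (2*π)) := by
    ext x
    simp only [mem_setOf_eq, mem_Icc, mem_union, mem_Ico, mem_Ioo, mem_Ioc]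
    rw [pos_iff m x, neg_iff m x, ← hε]
    constructor
    · rintro ⟨⟨hx0, hx2⟩, ⟨k, hk⟩ | ⟨k, hk⟩⟩
      · rw [abs_lt] at hk
        rcases le_or_gt k 0 with hk0 | hk1
        · have hkr : (k:ℝ) ≤ 0 := by exact_mod_cast hk0
          left; exact ⟨hx0, by nlinarith [hk.2]⟩
        · have hkr : (1:ℝ) ≤ (k:ℝ) := by exact_mod_cast hk1
          right; right; exact ⟨by nlinarith [hk.1], hx2⟩
      · rw [abs_lt] at hk
        have hk1 : k = 1 := by
          rcases le_or_gt k 0 with h0 | h0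
          · have hkr : (k:ℝ) ≤ 0 := by exact_mod_cast h0
            exfalso; nlinarith [hk.2]
          rcases le_or_gt 2 k with h2 | h2
          · have hkr : (2:ℝ) ≤ (k:ℝ) := by exact_mod_cast h2
            exfalso; nlinarith [hk.1]
          omega
        subst hk1
        right; left
        push_cast at hk
        exact ⟨by linarith [hk.1], by linarith [hk.2]⟩
    · rintro (⟨h0, h1⟩ | ⟨h0, h1⟩ | ⟨h0, h1⟩)
      · exact ⟨⟨h0, by linarith⟩, Or.inl ⟨0, by rw [abs_lt]; push_cast; constructor <;> linarith⟩⟩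
      · refine ⟨⟨by linarith, by linarith⟩, Or.inr ⟨1, ?_⟩⟩
        rw [abs_lt]; push_cast; constructor <;> linarith
      · exact ⟨⟨by linarith, h1⟩, Or.inl ⟨1, by rw [abs_lt]; push_cast; constructor <;> linarith⟩⟩
  unfold cosP
  rw [hset]
  have hd1 : Disjoint (Ioo (π-ε) (π+ε)) (Ioc (2*π-ε) (2*π)) := by
    rw [Set.disjoint_left]; rintro x ⟨_, h2⟩ ⟨h3, _⟩; linarith
  have hd2 : Disjoint (Ico (0:ℝ) ε) (Ioo (π-ε) (π+ε) ∪ Ioc (2*π-ε) (2*π)) := by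
    rw [Set.disjoint_left]; rintro x ⟨_, h2⟩ (⟨h3, _⟩ | ⟨h3, _⟩) <;> linarith
  rw [measure_union hd2 ((measurableSet_Ioo.union measurableSet_Ioc)),
    measure_union hd1 measurableSet_Ioc,
    Real.volume_Ico, Real.volume_Ioo, Real.volume_Ioc,
    ← ENNReal.ofReal_add (by linarith) (by linarith),
    ← ENNReal.ofReal_add (by linarith) (by linarith),
    ENNReal.toReal_ofReal (by linarith)]
  have hsum : ε - 0 + (π + ε - (π - ε) + (2 * π - (2 * π - ε))) = 4 * ε := by ring
  rw [hsum, hε]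
  have h3m' : (3:ℝ)^m ≠ 0 := by positivity
  field_simp
  ring
end

section
/- Suppose a1 < a2 < ... < an are odd natural numbers with P(a1,...,an) = 1/an. Then P(a1,...,an, 3an) = 1/(3an). -/
open MeasureTheory Real Set

lemma forall_snoc {k : ℕ} {α : Type*} (a : Fin k → α) (y : α) (P : α → Prop) :
    (∀ i : Fin (k+1), P ((Fin.snoc a y : Fin (k+1) → α) i)) ↔ (∀ i : Fin k, P (a i)) ∧ P y := by
  constructor
  · intro h
    exact ⟨fun i => by simpa [Fin.snoc_castSucc] using h i.castSucc,
      by simpa [Fin.snoc_last] using h (Fin.last k)⟩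
  · rintro ⟨h1, h2⟩ i
    refine Fin.lastCases ?_ ?_ i
    · simpa [Fin.snoc_last] using h2
    · intro j; simpa [Fin.snoc_castSucc] using h1 j

lemma cosAux_pi_add (k : ℕ) (hk : Odd k) (t : ℝ) :
    Real.cos (k * (π + t)) = -Real.cos (k * t) := by
  obtain ⟨j, rfl⟩ := hk
  have h1 : ((2*j+1 : ℕ) : ℝ) * (π + t) = (((2*j+1:ℕ):ℝ) * t + π) + j * (2*π) := by
    push_cast; ring
  rw [h1, Real.cos_add_nat_mul_two_pi, Real.cos_add_pi]

lemma cosAux_pi_sub (k : ℕ) (hk : Odd k) (t : ℝ) :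
    Real.cos (k * (π - t)) = -Real.cos (k * t) := by
  have h := cosAux_pi_add k hk (-t)
  rw [show (k:ℝ) * (π + -t) = k * (π - t) by ring] at h
  rw [h, show (k:ℝ) * -t = -(k*t) by ring, Real.cos_neg]

lemma cosAux_two_pi_sub (k : ℕ) (t : ℝ) :
    Real.cos (k * (2*π - t)) = Real.cos (k * t) := by
  rw [show (k:ℝ) * (2*π - t) = k * (2*π) - k * t by ring, Real.cos_nat_mul_two_pi_sub]

set_option maxHeartbeats 2000000 in
theorem stmt_4 (n : ℕ) (a : Fin (n + 1) → ℕ) (hmono : StrictMono a)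
    (hodd : ∀ i, Odd (a i)) (hP : cosP (n + 1) a = 1 / (a (Fin.last n) : ℝ)) :
    cosP (n + 2) (Fin.snoc a (3 * a (Fin.last n))) = 1 / (3 * (a (Fin.last n) : ℝ)) := by
  have pi_pos := Real.pi_pos
  set m : ℕ := a (Fin.last n) with hmdef
  have hmodd : Odd m := hodd _
  have hm0 : 0 < m := hmodd.pos
  have hM1 : (1:ℝ) ≤ (m:ℝ) := by exact_mod_cast hm0
  have hM0 : (0:ℝ) < (m:ℝ) := by linarith
  set δ : ℝ := π / (2 * (m:ℝ)) with hδdef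
  have hδ0 : 0 < δ := by positivity
  have hMδ : (m:ℝ) * δ = π / 2 := by rw [hδdef]; field_simp
  have hδle : δ ≤ π / 2 := by
    rw [hδdef]
    rw [div_le_div_iff₀ (by positivity) (by norm_num)]
    nlinarith
  have hc3 : ((3*m : ℕ):ℝ) = 3*(m:ℝ) := by push_cast; ring
  have hodd3 : Odd (3*m) := Odd.mul (⟨1, rfl⟩ : Odd 3) hmodd
  -- core positivity on (0, δ)
  have core : ∀ t ∈ Ioo (0:ℝ) δ, ∀ i : Fin (n+1), 0 < Real.cos ((a i : ℝ) * t) := by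
    rintro t ⟨ht0, htδ⟩ i
    have h1 : (1:ℝ) ≤ (a i : ℝ) := by exact_mod_cast (hodd i).pos
    have h2 : (a i : ℝ) ≤ (m:ℝ) := by exact_mod_cast hmono.monotone (Fin.le_last i)
    apply Real.cos_pos_of_mem_Ioo
    constructor
    · nlinarith
    · nlinarith
  -- characterization for the new frequency on (0, δ)
  have core3 : ∀ t ∈ Ioo (0:ℝ) δ, (0 < Real.cos (((3*m : ℕ):ℝ) * t) ↔ t < δ/3) := by
    rintro t ⟨ht0, htδ⟩
    rw [hc3]
    constructor
    · intro h
      by_contra hlt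
      push_neg at hlt
      have h1 : π/2 ≤ 3*(m:ℝ)*t := by nlinarith
      have h2 : 3*(m:ℝ)*t ≤ π + π/2 := by nlinarith
      have := Real.cos_nonpos_of_pi_div_two_le_of_le h1 h2
      linarith
    · intro h
      apply Real.cos_pos_of_mem_Ioo
      constructor
      · nlinarith
      · nlinarith
  -- unfold and name the two sets
  unfold cosP at hP ⊢
  set S : Set ℝ := {x : ℝ | x ∈ Icc 0 (2 * π) ∧
    ((∀ i, 0 < Real.cos ((a i : ℝ) * x)) ∨ (∀ i, Real.cos ((a i : ℝ) * x) < 0))} with hSdef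
  set S' : Set ℝ := {x : ℝ | x ∈ Icc 0 (2 * π) ∧
    ((∀ i : Fin (n+2), 0 < Real.cos (((Fin.snoc a (3 * m) : Fin (n+2) → ℕ) i : ℝ) * x)) ∨
     (∀ i : Fin (n+2), Real.cos (((Fin.snoc a (3 * m) : Fin (n+2) → ℕ) i : ℝ) * x) < 0))}
    with hS'def
  -- splitting the snoc conditions
  have hsplitpos : ∀ x : ℝ,
      (∀ i : Fin (n+2), 0 < Real.cos (((Fin.snoc a (3 * m) : Fin (n+2) → ℕ) i : ℝ) * x)) ↔
      ((∀ i : Fin (n+1), 0 < Real.cos ((a i : ℝ) * x)) ∧ 0 < Real.cos (((3*m : ℕ) : ℝ) * x)) :=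
    fun x => forall_snoc a (3*m) (fun k : ℕ => 0 < Real.cos ((k:ℝ) * x))
  have hsplitneg : ∀ x : ℝ,
      (∀ i : Fin (n+2), Real.cos (((Fin.snoc a (3 * m) : Fin (n+2) → ℕ) i : ℝ) * x) < 0) ↔
      ((∀ i : Fin (n+1), Real.cos ((a i : ℝ) * x) < 0) ∧ Real.cos (((3*m : ℕ) : ℝ) * x) < 0) :=
    fun x => forall_snoc a (3*m) (fun k : ℕ => Real.cos ((k:ℝ) * x) < 0)
  -- sign lemmas on the four intervals (old frequencies)
  have neg2 : ∀ x ∈ Ioo (π - δ) π, ∀ i : Fin (n+1), Real.cos ((a i : ℝ) * x) < 0 := by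
    rintro x ⟨h1, h2⟩ i
    have ht : π - x ∈ Ioo (0:ℝ) δ := ⟨by linarith, by linarith⟩
    have hpos := core _ ht i
    have hx : (a i : ℝ) * x = (a i : ℝ) * (π - (π - x)) := by ring
    rw [hx, cosAux_pi_sub _ (hodd i)]
    linarith
  have neg3 : ∀ x ∈ Ioo π (π + δ), ∀ i : Fin (n+1), Real.cos ((a i : ℝ) * x) < 0 := by
    rintro x ⟨h1, h2⟩ i
    have ht : x - π ∈ Ioo (0:ℝ) δ := ⟨by linarith, by linarith⟩
    have hpos := core _ ht i
    have hx : (a i : ℝ) * x = (a i : ℝ) * (π + (x - π)) := by ring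
    rw [hx, cosAux_pi_add _ (hodd i)]
    linarith
  have pos4 : ∀ x ∈ Ioo (2*π - δ) (2*π), ∀ i : Fin (n+1), 0 < Real.cos ((a i : ℝ) * x) := by
    rintro x ⟨h1, h2⟩ i
    have ht : 2*π - x ∈ Ioo (0:ℝ) δ := ⟨by linarith, by linarith⟩
    have hpos := core _ ht i
    have hx : (a i : ℝ) * x = (a i : ℝ) * (2*π - (2*π - x)) := by ring
    rw [hx, cosAux_two_pi_sub]
    exact hpos
  -- sign characterizations for the new frequency on the four intervals
  have new2 : ∀ x ∈ Ioo (π - δ) π, (Real.cos (((3*m:ℕ):ℝ) * x) < 0 ↔ π - δ/3 < x) := by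
    rintro x ⟨h1, h2⟩
    have ht : π - x ∈ Ioo (0:ℝ) δ := ⟨by linarith, by linarith⟩
    have hx : ((3*m:ℕ) : ℝ) * x = ((3*m:ℕ) : ℝ) * (π - (π - x)) := by ring
    rw [hx, cosAux_pi_sub _ hodd3, neg_lt, neg_zero, core3 _ ht]
    constructor <;> intro h <;> linarith
  have new3 : ∀ x ∈ Ioo π (π + δ), (Real.cos (((3*m:ℕ):ℝ) * x) < 0 ↔ x < π + δ/3) := by
    rintro x ⟨h1, h2⟩
    have ht : x - π ∈ Ioo (0:ℝ) δ := ⟨by linarith, by linarith⟩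
    have hx : ((3*m:ℕ) : ℝ) * x = ((3*m:ℕ) : ℝ) * (π + (x - π)) := by ring
    rw [hx, cosAux_pi_add _ hodd3, neg_lt, neg_zero, core3 _ ht]
    constructor <;> intro h <;> linarith
  have new4 : ∀ x ∈ Ioo (2*π - δ) (2*π), (0 < Real.cos (((3*m:ℕ):ℝ) * x) ↔ 2*π - δ/3 < x) := by
    rintro x ⟨h1, h2⟩
    have ht : 2*π - x ∈ Ioo (0:ℝ) δ := ⟨by linarith, by linarith⟩
    have hx : ((3*m:ℕ) : ℝ) * x = ((3*m:ℕ) : ℝ) * (2*π - (2*π - x)) := by ring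
    rw [hx, cosAux_two_pi_sub, core3 _ ht]
    constructor <;> intro h <;> linarith
  -- the two unions of intervals
  set U : Set ℝ := Ioo 0 δ ∪ (Ioo (π - δ) π ∪ (Ioo π (π + δ) ∪ Ioo (2*π - δ) (2*π))) with hUdef
  set V : Set ℝ := Ioo 0 (δ/3) ∪
      (Ioo (π - δ/3) π ∪ (Ioo π (π + δ/3) ∪ Ioo (2*π - δ/3) (2*π))) with hVdef
  have hvol : ∀ e : ℝ, 0 ≤ e → e ≤ π/2 →
      volume (Ioo (0:ℝ) e ∪ (Ioo (π - e) π ∪ (Ioo π (π + e) ∪ Ioo (2*π - e) (2*π)))) =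
        ENNReal.ofReal (4*e) := by
    intro e he0 heδ
    have d34 : Disjoint (Ioo π (π + e)) (Ioo (2*π - e) (2*π)) := by
      rw [Set.Ioo_disjoint_Ioo]
      exact le_trans inf_le_left (le_trans (by linarith) le_sup_right)
    have d2 : Disjoint (Ioo (π - e) π) (Ioo π (π + e) ∪ Ioo (2*π - e) (2*π)) := by
      refine Set.disjoint_union_right.mpr ⟨?_, ?_⟩ <;> rw [Set.Ioo_disjoint_Ioo]
      · exact le_trans inf_le_left (le_trans (by linarith) le_sup_right)
      · exact le_trans inf_le_left (le_trans (by linarith) le_sup_right)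
    have d1 : Disjoint (Ioo (0:ℝ) e) (Ioo (π - e) π ∪ (Ioo π (π + e) ∪ Ioo (2*π - e) (2*π))) := by
      refine Set.disjoint_union_right.mpr ⟨?_,
        Set.disjoint_union_right.mpr ⟨?_, ?_⟩⟩ <;> rw [Set.Ioo_disjoint_Ioo]
      · exact le_trans inf_le_left (le_trans (by linarith) le_sup_right)
      · exact le_trans inf_le_left (le_trans (by linarith) le_sup_right)
      · exact le_trans inf_le_left (le_trans (by linarith) le_sup_right)
    rw [measure_union d1 (((measurableSet_Ioo).union
        ((measurableSet_Ioo).union measurableSet_Ioo))),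
      measure_union d2 ((measurableSet_Ioo).union measurableSet_Ioo),
      measure_union d34 measurableSet_Ioo,
      Real.volume_Ioo, Real.volume_Ioo, Real.volume_Ioo, Real.volume_Ioo,
      ← ENNReal.ofReal_add (by linarith) (by linarith),
      ← ENNReal.ofReal_add (by linarith) (by linarith),
      ← ENNReal.ofReal_add (by linarith) (by linarith)]
    congr 1
    ring
  have h2pi : (0:ℝ) < 2*π := by linarith
  -- U ⊆ S
  have hUS : U ⊆ S := by
    rw [hUdef, hSdef]
    refine Set.union_subset ?_ (Set.union_subset ?_ (Set.union_subset ?_ ?_)) <;>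
      rintro x hx
    · exact ⟨⟨hx.1.le, by have := hx.2; linarith⟩, Or.inl fun i => core x hx i⟩
    · exact ⟨⟨by have := hx.1; linarith, by have := hx.2; linarith⟩,
        Or.inr fun i => neg2 x hx i⟩
    · exact ⟨⟨by have := hx.1; linarith, by have := hx.2; linarith⟩,
        Or.inr fun i => neg3 x hx i⟩
    · exact ⟨⟨by have := hx.1; linarith, hx.2.le⟩, Or.inl fun i => pos4 x hx i⟩
  -- S' ⊆ S
  have hS'S : S' ⊆ S := by
    rw [hSdef, hS'def]
    rintro x ⟨hicc, hbr⟩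
    refine ⟨hicc, ?_⟩
    rcases hbr with h | h
    · exact Or.inl ((hsplitpos x).mp h).1
    · exact Or.inr ((hsplitneg x).mp h).1
  -- V ⊆ S'
  have hVS' : V ⊆ S' := by
    rw [hVdef, hS'def]
    refine Set.union_subset ?_ (Set.union_subset ?_ (Set.union_subset ?_ ?_)) <;>
      rintro x ⟨hx1, hx2⟩
    · refine ⟨⟨hx1.le, by linarith⟩, Or.inl ((hsplitpos x).mpr ⟨?_, ?_⟩)⟩
      · exact fun i => core x ⟨hx1, by linarith⟩ i
      · exact (core3 x ⟨hx1, by linarith⟩).mpr hx2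
    · refine ⟨⟨by linarith, by linarith⟩, Or.inr ((hsplitneg x).mpr ⟨?_, ?_⟩)⟩
      · exact fun i => neg2 x ⟨by linarith, hx2⟩ i
      · exact (new2 x ⟨by linarith, hx2⟩).mpr hx1
    · refine ⟨⟨by linarith, by linarith⟩, Or.inr ((hsplitneg x).mpr ⟨?_, ?_⟩)⟩
      · exact fun i => neg3 x ⟨hx1, by linarith⟩ i
      · exact (new3 x ⟨hx1, by linarith⟩).mpr hx2
    · refine ⟨⟨by linarith, hx2.le⟩, Or.inl ((hsplitpos x).mpr ⟨?_, ?_⟩)⟩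
      · exact fun i => pos4 x ⟨by linarith, hx2⟩ i
      · exact (new4 x ⟨by linarith, hx2⟩).mpr hx1
  -- S' ∩ U ⊆ V
  have hinter : S' ∩ U ⊆ V := by
    rw [hUdef, hVdef, hS'def]
    rintro x ⟨⟨hicc, hbr⟩, hxU⟩
    rcases hxU with hx | hx | hx | hx
    · -- x ∈ Ioo 0 δ : positive branch must hold
      rcases hbr with h | h
      · have h3 := ((hsplitpos x).mp h).2
        exact Or.inl ⟨hx.1, (core3 x hx).mp h3⟩
      · exact absurd (core x hx 0) (not_lt.mpr (((hsplitneg x).mp h).1 0).le)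
    · rcases hbr with h | h
      · exact absurd (((hsplitpos x).mp h).1 0) (not_lt.mpr (neg2 x hx 0).le)
      · have h3 := ((hsplitneg x).mp h).2
        exact Or.inr (Or.inl ⟨(new2 x hx).mp h3, hx.2⟩)
    · rcases hbr with h | h
      · exact absurd (((hsplitpos x).mp h).1 0) (not_lt.mpr (neg3 x hx 0).le)
      · have h3 := ((hsplitneg x).mp h).2
        exact Or.inr (Or.inr (Or.inl ⟨hx.1, (new3 x hx).mp h3⟩))
    · rcases hbr with h | h
      · have h3 := ((hsplitpos x).mp h).2
        exact Or.inr (Or.inr (Or.inr ⟨(new4 x hx).mp h3, hx.2⟩))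
      · exact absurd (pos4 x hx 0) (not_lt.mpr (((hsplitneg x).mp h).1 0).le)
  -- volume bookkeeping
  have hmne : (m:ℝ) ≠ 0 := ne_of_gt hM0
  have hSIcc : S ⊆ Icc 0 (2*π) := by rw [hSdef]; exact fun x hx => hx.1
  have hSfin : volume S ≠ ⊤ := by
    refine ne_top_of_le_ne_top ?_ (measure_mono hSIcc)
    rw [Real.volume_Icc]
    exact ENNReal.ofReal_ne_top
  have hStoReal : (volume S).toReal = 4*δ := by
    rw [div_eq_iff (by positivity : (2*π:ℝ) ≠ 0)] at hP
    rw [hP, hδdef]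
    field_simp
    ring
  have hSvol : volume S = ENNReal.ofReal (4*δ) := by
    rw [← hStoReal, ENNReal.ofReal_toReal hSfin]
  have hUvol : volume U = ENNReal.ofReal (4*δ) := by
    rw [hUdef]; exact hvol δ hδ0.le hδle
  have hUmeas : MeasurableSet U := by
    rw [hUdef]
    exact measurableSet_Ioo.union (measurableSet_Ioo.union
      (measurableSet_Ioo.union measurableSet_Ioo))
  have hSU0 : volume (S \ U) = 0 := by
    rw [measure_diff hUS hUmeas.nullMeasurableSet
      (by rw [hUvol]; exact ENNReal.ofReal_ne_top), hSvol, hUvol, tsub_self]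
  have hVvol : volume V = ENNReal.ofReal (4*(δ/3)) := by
    rw [hVdef]; exact hvol (δ/3) (by linarith) (by linarith)
  have hS'vol : volume S' = ENNReal.ofReal (4*(δ/3)) := by
    refine le_antisymm ?_ (hVvol ▸ measure_mono hVS')
    calc volume S' = volume ((S' ∩ U) ∪ (S' \ U)) := by rw [Set.inter_union_diff]
      _ ≤ volume (S' ∩ U) + volume (S' \ U) := measure_union_le _ _
      _ ≤ volume V + 0 := add_le_add (measure_mono hinter)
          ((measure_mono (Set.diff_subset_diff_left hS'S)).trans hSU0.le)
      _ = ENNReal.ofReal (4*(δ/3)) := by rw [add_zero, hVvol]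
  rw [hS'vol, ENNReal.toReal_ofReal (by positivity), hδdef]
  field_simp
  ring
end

section
/- Suppose a1 < a2 < ... < an are odd natural numbers with P(a1,...,an) = 1/an. Then the set {x ∈ [0,2π] : all cos(ai x) have the same strict sign} equals [0, π/(2an)) ∪ (π − π/(2an), π + π/(2an)) ∪ (2π − π/(2an), 2π]. -/
/-!
Let `A` be the largest frequency and `δ = π / (2A)`. Since every `aᵢ` is odd and at most `A`,
all `cos (aᵢ x)` have the sign of `(-1)^m` as soon as `|x - mπ| < δ`, so the three arcs of total
length `4δ = 2π / A` around `0, π, 2π` lie in the set; by hypothesis the set has exactly that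
measure. What remains outside the closed arcs is then a relatively open null subset of `[0, 2π]`,
hence empty, and the arc endpoints are excluded because `cos (A x)` vanishes there.
-/

open MeasureTheory Real Set

theorem Real.neg_one_pow_mul_cos_nat_mul_pos {k m : ℕ} (hk : Odd k) {x : ℝ}
    (h : k * |x - m * π| < π / 2) : 0 < (-1) ^ m * cos (k * x) := by
  have hkx : (k : ℝ) * x = k * (x - m * π) + (k * m : ℕ) * π := by push_cast; ring
  rw [hkx, cos_add_nat_mul_pi, pow_mul, hk.neg_one_pow, ← mul_assoc, ← mul_pow, neg_one_mul,
    neg_neg, one_pow, one_mul, ← cos_abs, abs_mul, Nat.abs_cast]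
  have := mul_nonneg k.cast_nonneg (abs_nonneg (x - m * π))
  exact cos_pos_of_mem_Ioo ⟨by linarith [pi_pos], h⟩

theorem Real.cos_nat_mul_eq_zero_of_abs_sub_eq {k : ℕ} (hk : k ≠ 0) {m : ℤ} {x : ℝ}
    (h : |x - m * π| = π / (2 * k)) : cos (k * x) = 0 := by
  have hk' : (k : ℝ) ≠ 0 := by exact_mod_cast hk
  rw [cos_eq_zero_iff]
  rcases (abs_eq (by positivity)).mp h with h | h
  · refine ⟨k * m, ?_⟩
    rw [show x = m * π + π / (2 * k) by linarith]
    push_cast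
    field_simp
  · refine ⟨k * m - 1, ?_⟩
    rw [show x = m * π - π / (2 * k) by linarith]
    push_cast
    field_simp
    ring

theorem Icc_inter_subset_of_measure_sdiff_eq_zero {α : Type*} [TopologicalSpace α]
    [LinearOrder α] [OrderTopology α] [DenselyOrdered α] [MeasurableSpace α] (μ : Measure α)
    [μ.IsOpenPosMeasure] {a b : α} (hab : a < b) {V J : Set α} (hV : IsOpen V)
    (hJ : IsClosed J) (h : μ ((Icc a b ∩ V) \ J) = 0) : Icc a b ∩ V ⊆ J := by
  have hW : IsOpen (V \ J) := hV.sdiff hJ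
  have hIoo : V \ J ∩ Ioo a b = ∅ := by
    rw [← (hW.inter isOpen_Ioo).measure_eq_zero_iff μ]
    refine measure_mono_null ?_ h
    rintro x ⟨⟨hxV, hxJ⟩, hxI⟩
    exact ⟨⟨Ioo_subset_Icc_self hxI, hxV⟩, hxJ⟩
  intro x ⟨hxI, hxV⟩
  by_contra hxJ
  have := hW.inter_closure (show x ∈ V \ J ∩ closure (Ioo a b) by
    rw [closure_Ioo hab.ne]; exact ⟨⟨hxV, hxJ⟩, hxI⟩)
  rwa [hIoo, closure_empty] at this

def sameSignSet {ι : Type*} (a : ι → ℝ) : Set ℝ :=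
  {x | (∀ i, 0 < cos (a i * x)) ∨ ∀ i, cos (a i * x) < 0}

theorem isOpen_sameSignSet {ι : Type*} [Finite ι] (a : ι → ℝ) : IsOpen (sameSignSet a) := by
  have hc : ∀ i, Continuous fun x => cos (a i * x) := fun i => by fun_prop
  simp only [sameSignSet, ofPred_or, ofPred_forall]
  exact (isOpen_iInter_of_finite fun i => isOpen_lt continuous_const (hc i)).union
    (isOpen_iInter_of_finite fun i => isOpen_lt (hc i) continuous_const)

def nearPiMultiples (δ : ℝ) : Set ℝ :=
  Ico 0 δ ∪ Ioo (π - δ) (π + δ) ∪ Ioc (2 * π - δ) (2 * π)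

theorem measurableSet_nearPiMultiples (δ : ℝ) : MeasurableSet (nearPiMultiples δ) :=
  (measurableSet_Ico.union measurableSet_Ioo).union measurableSet_Ioc

theorem volume_nearPiMultiples {δ : ℝ} (h0 : 0 ≤ δ) (hδ : δ ≤ π / 2) :
    volume (nearPiMultiples δ) = ENNReal.ofReal (4 * δ) := by
  have hd₁ : Disjoint (Ico 0 δ) (Ioo (π - δ) (π + δ)) :=
    disjoint_left.mpr fun x hx hx' => by linarith [hx.2, hx'.1]
  have hd₂ : Disjoint (Ico 0 δ ∪ Ioo (π - δ) (π + δ)) (Ioc (2 * π - δ) (2 * π)) :=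
    disjoint_left.mpr fun x hx hx' => by rcases hx with hx | hx <;> linarith [hx.2, hx'.1]
  rw [nearPiMultiples, measure_union hd₂ measurableSet_Ioc, measure_union hd₁ measurableSet_Ioo,
    Real.volume_Ico, Real.volume_Ioo, Real.volume_Ioc, ← ENNReal.ofReal_add (by linarith)
      (by linarith), ← ENNReal.ofReal_add (by linarith) (by linarith)]
  ring_nf

theorem nearPiMultiples_subset_Icc {δ : ℝ} (hδ : δ ≤ π) :
    nearPiMultiples δ ⊆ Icc 0 (2 * π) := by
  have := pi_pos
  rintro x ((hx | hx) | hx) <;> constructor <;> linarith [hx.1, hx.2]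

theorem nearPiMultiples_subset_sameSignSet {ι : Type*} {a : ι → ℕ} (hodd : ∀ i, Odd (a i))
    {δ : ℝ} (hδ : ∀ i, a i * δ ≤ π / 2) :
    nearPiMultiples δ ⊆ sameSignSet fun i => (a i : ℝ) := by
  intro x hx
  have key : ∀ m : ℕ, |x - m * π| < δ → ∀ i, 0 < (-1) ^ m * cos (a i * x) := fun m hm i =>
    neg_one_pow_mul_cos_nat_mul_pos (hodd i) <| (mul_lt_mul_of_pos_left hm
      (by exact_mod_cast (hodd i).pos)).trans_le (hδ i)
  rcases hx with (hx | hx) | hx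
  · refine Or.inl fun i => by simpa using key 0 (by simpa [abs_of_nonneg hx.1] using hx.2) i
  · refine Or.inr fun i => by
      simpa using key 1 (by rw [abs_sub_lt_iff]; push_cast; constructor <;> linarith [hx.1, hx.2]) i
  · refine Or.inl fun i => by
      simpa using key 2 (by rw [abs_sub_lt_iff]; push_cast; constructor <;> linarith [hx.1, hx.2]) i

theorem mem_nearPiMultiples_of_forall_abs_sub_ne {δ x : ℝ}
    (hcl : x ∈ closure (nearPiMultiples δ)) (hne : ∀ m : ℤ, |x - m * π| ≠ δ) :
    x ∈ nearPiMultiples δ := by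
  have hJ : x ∈ Icc 0 δ ∪ Icc (π - δ) (π + δ) ∪ Icc (2 * π - δ) (2 * π) :=
    closure_minimal (union_subset_union (union_subset_union Ico_subset_Icc_self
      Ioo_subset_Icc_self) Ioc_subset_Icc_self) ((isClosed_Icc.union isClosed_Icc).union
        isClosed_Icc) hcl
  have h₀ := hne 0
  have h₁ := hne 1
  have h₂ := hne 2
  simp only [Int.cast_zero, Int.cast_one, Int.cast_ofNat, zero_mul, sub_zero, one_mul]
    at h₀ h₁ h₂
  rcases hJ with (hx | hx) | hx
  · have hδ : 0 ≤ δ := hx.1.trans hx.2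
    refine Or.inl <| Or.inl ⟨hx.1, lt_of_le_of_ne hx.2 fun h => h₀ ?_⟩
    rw [h, abs_of_nonneg hδ]
  · have hδ : 0 ≤ δ := by linarith [hx.1, hx.2]
    refine Or.inl <| Or.inr
      ⟨lt_of_le_of_ne hx.1 fun h => h₁ ?_, lt_of_le_of_ne hx.2 fun h => h₁ ?_⟩
    · simp [← h, abs_of_nonneg hδ]
    · simp [h, abs_of_nonneg hδ]
  · have hδ : 0 ≤ δ := by linarith [hx.1, hx.2]
    refine Or.inr ⟨lt_of_le_of_ne hx.1 fun h => h₂ ?_, hx.2⟩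
    simp [← h, abs_of_nonneg hδ]

theorem volume_Icc_inter_sameSignSet_of_cosP_eq {n : ℕ} {a : Fin n → ℕ} {c : ℝ}
    (h : cosP n a = c) :
    volume (Icc 0 (2 * π) ∩ sameSignSet fun i => (a i : ℝ)) = ENNReal.ofReal (2 * π * c) := by
  rw [← ENNReal.ofReal_toReal ((measure_mono inter_subset_left).trans_lt measure_Icc_lt_top).ne,
    ← h, cosP, mul_div_cancel₀ _ (by positivity)]
  rfl

theorem stmt_5 (n : ℕ) (a : Fin (n + 1) → ℕ) (hmono : StrictMono a)
    (hodd : ∀ i, Odd (a i)) (hP : cosP (n + 1) a = 1 / (a (Fin.last n) : ℝ)) :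
    {x : ℝ | x ∈ Icc 0 (2 * π) ∧
        ((∀ i, 0 < Real.cos (a i * x)) ∨ (∀ i, Real.cos (a i * x) < 0))} =
      Ico 0 (π / (2 * (a (Fin.last n) : ℝ))) ∪
        Ioo (π - π / (2 * (a (Fin.last n) : ℝ))) (π + π / (2 * (a (Fin.last n) : ℝ))) ∪
        Ioc (2 * π - π / (2 * (a (Fin.last n) : ℝ))) (2 * π) := by
  set A := a (Fin.last n)
  set δ := π / (2 * (A : ℝ)) with hδ_def
  set S := Icc 0 (2 * π) ∩ sameSignSet fun i => (a i : ℝ)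
  have hA : 0 < A := (hodd _).pos
  have hAδ : A * δ = π / 2 := by rw [hδ_def]; field_simp
  have hδ0 : 0 < δ := by positivity
  have hδ : ∀ i, a i * δ ≤ π / 2 := fun i => hAδ ▸ mul_le_mul_of_nonneg_right
    (by exact_mod_cast hmono.monotone (Fin.le_last i)) (by positivity)
  have hδπ : δ ≤ π / 2 := hAδ ▸ le_mul_of_one_le_left hδ0.le (by exact_mod_cast hA)
  have hIS : nearPiMultiples δ ⊆ S :=
    subset_inter (nearPiMultiples_subset_Icc (by linarith [pi_pos]))
      (nearPiMultiples_subset_sameSignSet hodd hδ)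
  have hvolS : volume S = ENNReal.ofReal (4 * δ) := by
    rw [volume_Icc_inter_sameSignSet_of_cosP_eq hP, hδ_def]
    congr 1
    field_simp
    ring
  have hvolI := volume_nearPiMultiples hδ0.le hδπ
  have hnull : volume (S \ nearPiMultiples δ) = 0 := by
    rw [measure_sdiff hIS (measurableSet_nearPiMultiples δ).nullMeasurableSet
      (hvolI ▸ ENNReal.ofReal_ne_top), hvolS, hvolI, tsub_self]
  have hS_closure : S ⊆ closure (nearPiMultiples δ) :=
    Icc_inter_subset_of_measure_sdiff_eq_zero volume (by positivity) (isOpen_sameSignSet _)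
      isClosed_closure (measure_mono_null (sdiff_subset_sdiff_right subset_closure) hnull)
  refine subset_antisymm (fun x hx => mem_nearPiMultiples_of_forall_abs_sub_ne (hS_closure hx)
    fun m hm => ?_) hIS
  have hcos := cos_nat_mul_eq_zero_of_abs_sub_eq hA.ne' hm
  rcases hx.2 with h | h
  · exact (h (Fin.last n)).ne' hcos
  · exact (h (Fin.last n)).ne hcos
end

section
/- Let a1,...,an be odd natural numbers with maximum an. Then the set [0, π/(2an)) ∪ (π − π/(2an), π + π/(2an)) ∪ (2π − π/(2an), 2π] is contained in {x ∈ [0,2π] : min_i cos(ai x) > 0 or max_i cos(ai x) < 0}. -/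
open MeasureTheory Real Set

lemma cos_pos_aux {t : ℝ} (h1 : -(π/2) < t) (h2 : t < π/2) : 0 < Real.cos t :=
  Real.cos_pos_of_mem_Ioo ⟨by linarith, by linarith⟩

theorem stmt_6 (n : ℕ) (a : Fin (n + 1) → ℕ) (hodd : ∀ i, Odd (a i))
    (hmax : ∀ i, a i ≤ a (Fin.last n)) :
    Ico 0 (π / (2 * (a (Fin.last n) : ℝ))) ∪
        Ioo (π - π / (2 * (a (Fin.last n) : ℝ))) (π + π / (2 * (a (Fin.last n) : ℝ))) ∪
        Ioc (2 * π - π / (2 * (a (Fin.last n) : ℝ))) (2 * π) ⊆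
      {x : ℝ | x ∈ Icc 0 (2 * π) ∧
        ((∀ i, 0 < Real.cos (a i * x)) ∨ (∀ i, Real.cos (a i * x) < 0))} := by
  have hpi := Real.pi_pos
  set N : ℝ := (a (Fin.last n) : ℝ) with hNdef
  have hN1 : 1 ≤ N := by
    have h := (hodd (Fin.last n)).pos
    rw [hNdef]; exact_mod_cast h
  have hN0 : 0 < N := by linarith
  have hbound : ∀ i, 1 ≤ (a i : ℝ) ∧ (a i : ℝ) ≤ N := by
    intro i
    refine ⟨by exact_mod_cast (hodd i).pos, ?_⟩
    rw [hNdef]; exact_mod_cast hmax i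
  have hfrac : π / (2 * N) ≤ π / 2 :=
    div_le_div_of_nonneg_left (le_of_lt hpi) (by linarith) (by linarith)
  have hkey : ∀ y : ℝ, y < π / (2 * N) → 2 * N * y < π := by
    intro y hy
    have := (lt_div_iff₀ (by positivity : (0:ℝ) < 2 * N)).mp hy
    nlinarith
  have hkey' : ∀ y : ℝ, -(π / (2 * N)) < y → -π < 2 * N * y := by
    intro y hy
    have := hkey (-y) (by linarith)
    nlinarith
  intro x hx
  rcases hx with (hx | hx) | hx
  · obtain ⟨hx0, hx1⟩ := hx
    have h1 : 2 * N * x < π := hkey x hx1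
    refine ⟨⟨hx0, by nlinarith⟩, Or.inl fun i => ?_⟩
    obtain ⟨hA1, hA2⟩ := hbound i
    apply cos_pos_aux
    · nlinarith
    · nlinarith
  · obtain ⟨hx0, hx1⟩ := hx
    have h1 : 2 * N * (x - π) < π := hkey _ (by linarith)
    have h2 : -π < 2 * N * (x - π) := hkey' _ (by linarith)
    refine ⟨⟨by linarith [hfrac], by nlinarith [hfrac]⟩, Or.inr fun i => ?_⟩
    obtain ⟨hA1, hA2⟩ := hbound i
    obtain ⟨k, hk⟩ := hodd i
    have hcos : Real.cos ((a i : ℝ) * x) = -Real.cos ((a i : ℝ) * (x - π)) := by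
      have : (a i : ℝ) * x = ((a i : ℝ) * (x - π) + π) + (k : ℝ) * (2 * π) := by
        have : (a i : ℝ) = 2 * (k : ℝ) + 1 := by exact_mod_cast hk
        rw [this]; ring
      rw [this, Real.cos_add_nat_mul_two_pi, Real.cos_add_pi]
    rw [hcos, neg_lt_zero]
    apply cos_pos_aux
    · rcases le_or_gt x π with h | h
      · nlinarith
      · nlinarith
    · rcases le_or_gt x π with h | h
      · nlinarith
      · nlinarith
  · obtain ⟨hx0, hx1⟩ := hx
    have h2 : -π < 2 * N * (x - 2 * π) := hkey' _ (by linarith)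
    have h1 : 2 * N * (x - 2 * π) ≤ 0 := by nlinarith
    refine ⟨⟨by nlinarith [hfrac], hx1⟩, Or.inl fun i => ?_⟩
    obtain ⟨hA1, hA2⟩ := hbound i
    have hcos : Real.cos ((a i : ℝ) * x) = Real.cos ((a i : ℝ) * (x - 2 * π)) := by
      have h3 : (a i : ℝ) * x = (a i : ℝ) * (x - 2 * π) + (a i : ℝ) * (2 * π) := by ring
      rw [h3]
      exact_mod_cast Real.cos_add_nat_mul_two_pi ((a i : ℝ) * (x - 2 * π)) (a i)
    rw [hcos]
    apply cos_pos_aux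
    · nlinarith
    · have hx2 : x - 2 * π ≤ 0 := by linarith
      nlinarith
end

section
/- Let a1,...,an be natural numbers and ℓ = lcm(a1,...,an). Then the indicator function χ(x), which is 1 if all cos(ai x) are positive or all are negative and 0 otherwise, is constant on every open interval (πm/(2ℓ), π(m+1)/(2ℓ)) for m = 0,1,...,4ℓ−1. -/
open MeasureTheory Real Set

/-- Indicator of the set where all `cos (aᵢ x)` have the same strict sign. -/
noncomputable def chi (n : ℕ) (a : Fin n → ℕ) (x : ℝ) : ℝ :=
  if (∀ i, 0 < Real.cos (a i * x)) ∨ (∀ i, Real.cos (a i * x) < 0) then 1 else 0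

theorem stmt_7 (n : ℕ) (a : Fin n → ℕ) (hpos : ∀ i, 0 < a i)
    (ℓ : ℕ) (hℓ : ℓ = Finset.univ.lcm a)
    (m : ℕ) (hm : m < 4 * ℓ) (x y : ℝ)
    (hx : x ∈ Ioo (π * m / (2 * (ℓ : ℝ))) (π * (m + 1) / (2 * (ℓ : ℝ))))
    (hy : y ∈ Ioo (π * m / (2 * (ℓ : ℝ))) (π * (m + 1) / (2 * (ℓ : ℝ)))) :
    chi n a x = chi n a y := by
  have hℓpos : 0 < ℓ := by omega
  -- cos (a i * t) ≠ 0 for t in the interval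
  have hne : ∀ i, ∀ t ∈ Ioo (π * m / (2 * (ℓ : ℝ))) (π * (m + 1) / (2 * (ℓ : ℝ))),
      Real.cos (a i * t) ≠ 0 := by
    intro i t ht hcos
    obtain ⟨j, hj⟩ := Real.cos_eq_zero_iff.1 hcos
    have hdvd : (a i : ℕ) ∣ ℓ := hℓ ▸ Finset.dvd_lcm (Finset.mem_univ i)
    obtain ⟨k, hk⟩ := hdvd
    have hai : (0 : ℝ) < a i := by exact_mod_cast hpos i
    have hkpos : 0 < k := by
      rcases Nat.eq_zero_or_pos k with h | h
      · subst h; simp at hk; omega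
      · exact h
    have hℓr : (ℓ : ℝ) = (a i : ℝ) * k := by exact_mod_cast hk
    have hπ := Real.pi_pos
    have hℓr0 : (0 : ℝ) < (ℓ : ℝ) := by exact_mod_cast hℓpos
    -- t = (2j+1) * π / (2 * a i)
    have ht1 : π * m / (2 * (ℓ : ℝ)) < t := ht.1
    have ht2 : t < π * (m + 1) / (2 * (ℓ : ℝ)) := ht.2
    have hteq : t = (2 * (j : ℝ) + 1) * π / (2 * a i) := by
      field_simp at hj ⊢
      nlinarith [hj]
    rw [hteq] at ht1 ht2
    have hk0 : (0 : ℝ) < (k : ℝ) := by exact_mod_cast hkpos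
    have h1 : (m : ℝ) < (2 * (j : ℝ) + 1) * k := by
      rw [div_lt_div_iff₀ (by positivity) (by positivity)] at ht1
      rw [hℓr] at ht1
      nlinarith [ht1, mul_pos hπ hai, hk0]
    have h2 : (2 * (j : ℝ) + 1) * k < (m : ℝ) + 1 := by
      rw [div_lt_div_iff₀ (by positivity) (by positivity)] at ht2
      rw [hℓr] at ht2
      nlinarith [ht2, mul_pos hπ hai, hk0]
    have h1' : (m : ℤ) < (2 * j + 1) * k := by exact_mod_cast h1
    have h2' : (2 * j + 1) * (k : ℤ) < (m : ℤ) + 1 := by exact_mod_cast h2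
    omega
  -- sign constancy for each i
  have hsign : ∀ i, (0 < Real.cos (a i * x) ↔ 0 < Real.cos (a i * y)) := by
    intro i
    have hsub : (Set.uIcc x y) ⊆ Ioo (π * m / (2 * (ℓ : ℝ))) (π * (m + 1) / (2 * (ℓ : ℝ))) := by
      apply Set.OrdConnected.uIcc_subset Set.ordConnected_Ioo hx hy
    have hcont : ContinuousOn (fun t : ℝ => Real.cos (a i * t)) (Set.uIcc x y) :=
      (Real.continuous_cos.comp (continuous_const.mul continuous_id)).continuousOn
    constructor
    · intro hxp
      by_contra hyn
      have hyn' : Real.cos (a i * y) < 0 :=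
        lt_of_le_of_ne (not_lt.1 hyn) (hne i y hy)
      have : (0 : ℝ) ∈ Set.uIcc (Real.cos (a i * x)) (Real.cos (a i * y)) := by
        rw [Set.mem_uIcc]; right; exact ⟨hyn'.le, hxp.le⟩
      obtain ⟨z, hz, hz0⟩ := intermediate_value_uIcc hcont this
      exact hne i z (hsub hz) hz0
    · intro hyp
      by_contra hxn
      have hxn' : Real.cos (a i * x) < 0 :=
        lt_of_le_of_ne (not_lt.1 hxn) (hne i x hx)
      have : (0 : ℝ) ∈ Set.uIcc (Real.cos (a i * x)) (Real.cos (a i * y)) := by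
        rw [Set.mem_uIcc]; left; exact ⟨hxn'.le, hyp.le⟩
      obtain ⟨z, hz, hz0⟩ := intermediate_value_uIcc hcont this
      exact hne i z (hsub hz) hz0
  have hsign' : ∀ i, (Real.cos (a i * x) < 0 ↔ Real.cos (a i * y) < 0) := by
    intro i
    constructor
    · intro h
      rcases lt_trichotomy (Real.cos (a i * y)) 0 with h' | h' | h'
      · exact h'
      · exact absurd h' (hne i y hy)
      · exact absurd ((hsign i).2 h') (lt_asymm h)
    · intro h
      rcases lt_trichotomy (Real.cos (a i * x)) 0 with h' | h' | h'
      · exact h'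
      · exact absurd h' (hne i x hx)
      · exact absurd ((hsign i).1 h') (lt_asymm h)
  unfold chi
  congr 1
  apply propext
  constructor
  · rintro (h | h)
    · exact Or.inl fun i => (hsign i).1 (h i)
    · exact Or.inr fun i => (hsign' i).1 (h i)
  · rintro (h | h)
    · exact Or.inl fun i => (hsign i).2 (h i)
    · exact Or.inr fun i => (hsign' i).2 (h i)
end

section
/- Let a1,...,an ∈ ℕ, ℓ = lcm(a1,...,an), and for each m ∈ {0,...,4ℓ−1} choose any sample point x*_m ∈ (πm/(2ℓ), π(m+1)/(2ℓ)). Then P(a1,...,an) = #{m : χ(x*_m) = 1} / (4ℓ). -/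
open MeasureTheory Real Set

open scoped Classical in
theorem stmt_8 (n : ℕ) (a : Fin n → ℕ) (hpos : ∀ i, 0 < a i)
    (ℓ : ℕ) (hℓ : ℓ = Finset.univ.lcm a) (x : ℕ → ℝ)
    (hx : ∀ m < 4 * ℓ,
      x m ∈ Ioo (π * m / (2 * (ℓ : ℝ))) (π * (m + 1) / (2 * (ℓ : ℝ)))) :
    cosP n a =
      (((Finset.range (4 * ℓ)).filter (fun m => chi n a (x m) = 1)).card : ℝ) / (4 * (ℓ : ℝ)) := by
  have hπ := Real.pi_pos
  have hℓpos : 0 < ℓ := by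
    refine Nat.pos_of_ne_zero fun h0 => ?_
    rw [hℓ] at h0
    obtain ⟨i, -, hi⟩ := Finset.lcm_eq_zero_iff.mp h0
    exact (hpos i).ne' hi
  have hℓR : (0 : ℝ) < ℓ := by exact_mod_cast hℓpos
  set d : ℝ := π / (2 * ℓ) with hd
  have hdpos : 0 < d := div_pos hπ (by linarith)
  -- the sample points lie in the rescaled intervals
  have hx' : ∀ m < 4 * ℓ, x m ∈ Ioo ((m : ℝ) * d) ((m + 1) * d) := by
    intro m hm
    have h := hx m hm
    have e1 : (m : ℝ) * d = π * m / (2 * ℓ) := by rw [hd]; ring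
    have e2 : ((m : ℝ) + 1) * d = π * (m + 1) / (2 * ℓ) := by rw [hd]; ring
    exact ⟨e1 ▸ h.1, e2 ▸ h.2⟩
  -- cos (a i * z) is never zero on the open subintervals
  have hnz : ∀ (i : Fin n) (m : ℕ), ∀ z ∈ Ioo ((m : ℝ) * d) ((m + 1) * d),
      Real.cos (a i * z) ≠ 0 := by
    intro i m z hz hcos
    obtain ⟨k, hk⟩ := Real.cos_eq_zero_iff.mp hcos
    obtain ⟨c, hc⟩ : (a i : ℕ) ∣ ℓ := hℓ ▸ Finset.dvd_lcm (Finset.mem_univ i)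
    have hA : (0 : ℝ) < a i := by exact_mod_cast hpos i
    have hcpos : 0 < c := by
      rcases Nat.eq_zero_or_pos c with h | h
      · exfalso; rw [h, Nat.mul_zero] at hc; omega
      · exact h
    have hcR : (0 : ℝ) < c := by exact_mod_cast hcpos
    have hcc : (ℓ : ℝ) = a i * c := by exact_mod_cast congrArg (Nat.cast : ℕ → ℝ) hc
    -- derive m < (2k+1)*c < m+1 over ℝ
    have hdd : d * (2 * ((a i : ℝ) * c)) = π := by
      rw [hd, hcc]; field_simp
    have h1 : (m : ℝ) < (2 * k + 1) * c := by
      have hz1 : (a i : ℝ) * ((m : ℝ) * d) < a i * z :=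
        mul_lt_mul_of_pos_left hz.1 hA
      rw [hk] at hz1
      nlinarith [hz1, hdd, mul_pos hA hdpos]
    have h2 : ((2 : ℝ) * k + 1) * c < m + 1 := by
      have hz2 : (a i : ℝ) * z < a i * (((m : ℝ) + 1) * d) := mul_lt_mul_of_pos_left hz.2 hA
      rw [hk] at hz2
      nlinarith [hz2, hdd, mul_pos hA hdpos]
    have h1' : (m : ℤ) < (2 * k + 1) * c := by exact_mod_cast h1
    have h2' : ((2 : ℤ) * k + 1) * c < m + 1 := by exact_mod_cast h2
    omega
  -- the sign of cos (a i * z) is constant on each open subinterval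
  have hsign : ∀ (i : Fin n) (m : ℕ) (u v : ℝ), u ∈ Ioo ((m : ℝ) * d) ((m + 1) * d) →
      v ∈ Ioo ((m : ℝ) * d) ((m + 1) * d) →
      0 < Real.cos (a i * u) → 0 < Real.cos (a i * v) := by
    intro i m u v hu hv hcu
    by_contra h
    have hv0 := hnz i m v hv
    have hcv : Real.cos (a i * v) < 0 := lt_of_le_of_ne (not_lt.mp h) hv0
    have hcont : ∀ p q : ℝ, ContinuousOn (fun z => Real.cos (a i * z)) (Icc p q) :=
      fun p q => (Real.continuous_cos.comp (continuous_const.mul continuous_id)).continuousOn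
    rcases le_total u v with huv | huv
    · obtain ⟨z, hz, hz0⟩ := intermediate_value_Icc' huv (hcont u v)
        (⟨hcv.le, hcu.le⟩ : (0:ℝ) ∈ Icc _ _)
      exact hnz i m z ⟨lt_of_lt_of_le hu.1 hz.1, lt_of_le_of_lt hz.2 hv.2⟩ hz0
    · obtain ⟨z, hz, hz0⟩ := intermediate_value_Icc huv (hcont v u)
        (⟨hcv.le, hcu.le⟩ : (0:ℝ) ∈ Icc _ _)
      exact hnz i m z ⟨lt_of_lt_of_le hv.1 hz.1, lt_of_le_of_lt hz.2 hu.2⟩ hz0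
  -- the defining condition is constant on each open subinterval
  set cond : ℝ → Prop :=
    fun z => (∀ i, 0 < Real.cos (a i * z)) ∨ (∀ i, Real.cos (a i * z) < 0) with hcond
  have hneg : ∀ (i : Fin n) (m : ℕ) (u : ℝ), u ∈ Ioo ((m : ℝ) * d) ((m + 1) * d) →
      (Real.cos (a i * u) < 0 ↔ ¬ 0 < Real.cos (a i * u)) := by
    intro i m u hu
    constructor
    · exact fun h => not_lt.mpr h.le
    · intro h; exact lt_of_le_of_ne (not_lt.mp h) (hnz i m u hu)
  have hconst : ∀ (m : ℕ) (u v : ℝ), u ∈ Ioo ((m : ℝ) * d) ((m + 1) * d) →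
      v ∈ Ioo ((m : ℝ) * d) ((m + 1) * d) → cond u → cond v := by
    intro m u v hu hv h
    rcases h with h | h
    · exact Or.inl fun i => hsign i m u v hu hv (h i)
    · refine Or.inr fun i => (hneg i m v hv).mpr fun hpv => ?_
      exact absurd (hsign i m v u hv hu hpv) (not_lt.mpr (h i).le)
  classical
  set S : Set ℝ := {z : ℝ | z ∈ Icc 0 (2 * π) ∧ cond z} with hS
  set Fs : Finset ℕ := (Finset.range (4 * ℓ)).filter (fun m => chi n a (x m) = 1) with hFs
  set F : Set ℝ := ⋃ m ∈ Fs, Ioo ((m : ℝ) * d) ((m + 1) * d) with hF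
  set T : Set ℝ := ⋃ m ∈ Finset.range (4 * ℓ + 1), ({((m : ℝ) * d)} : Set ℝ) with hT
  have h2π : ((4 * ℓ : ℕ) : ℝ) * d = 2 * π := by
    rw [hd]; push_cast; field_simp; ring
  have hchi : ∀ m, chi n a (x m) = 1 ↔ cond (x m) := by
    intro m
    unfold chi
    split
    · exact iff_of_true rfl ‹_›
    · exact iff_of_false (by norm_num) ‹_›
  have hFS : F ⊆ S := by
    intro z hz
    simp only [hF, Set.mem_iUnion] at hz
    obtain ⟨m, hm, hzm⟩ := hz
    rw [hFs, Finset.mem_filter, Finset.mem_range] at hm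
    have hxm := hx' m hm.1
    have hcz : cond z := hconst m (x m) z hxm hzm ((hchi m).mp hm.2)
    refine ⟨⟨?_, ?_⟩, hcz⟩
    · have : (0:ℝ) ≤ (m : ℝ) * d := by positivity
      linarith [hzm.1]
    · have hm1 : ((m : ℝ) + 1) ≤ ((4 * ℓ : ℕ) : ℝ) := by
        push_cast; have : (m : ℝ) + 1 ≤ 4 * ℓ := by exact_mod_cast Nat.succ_le_of_lt hm.1
        push_cast at this; linarith
      have : ((m : ℝ) + 1) * d ≤ ((4 * ℓ : ℕ) : ℝ) * d :=
        mul_le_mul_of_nonneg_right hm1 hdpos.le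
      linarith [hzm.2, h2π ▸ this]
  have hST : S ⊆ F ∪ T := by
    intro z hz
    by_cases hzT : z ∈ T
    · exact Or.inr hzT
    refine Or.inl ?_
    have hzI := hz.1
    have hz0 : (0:ℝ) ≤ z := hzI.1
    have hz2 : z ≤ 2 * π := hzI.2
    have hzd : z / d ≤ ((4 * ℓ : ℕ) : ℝ) := by
      rw [div_le_iff₀ hdpos]; linarith [h2π]
    set m : ℕ := Nat.floor (z / d) with hm
    have hm1 : (m : ℝ) ≤ z / d := Nat.floor_le (by positivity)
    have hm2 : z / d < m + 1 := Nat.lt_floor_add_one _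
    have hmle : m ≤ 4 * ℓ := by
      have : (m : ℝ) ≤ ((4 * ℓ : ℕ) : ℝ) := le_trans hm1 hzd
      exact_mod_cast this
    have hne : z ≠ (m : ℝ) * d := by
      intro hcontra
      apply hzT
      simp only [hT, Set.mem_iUnion, Set.mem_singleton_iff]
      exact ⟨m, Finset.mem_range.mpr (by omega), hcontra⟩
    have hlt : (m : ℝ) * d < z := by
      have hle : (m : ℝ) * d ≤ z := by
        have h' := mul_le_mul_of_nonneg_right hm1 hdpos.le
        rwa [div_mul_cancel₀ _ hdpos.ne'] at h'
      rcases lt_or_eq_of_le hle with h | h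
      · exact h
      · exact absurd h.symm hne
    have hlt2 : z < ((m : ℝ) + 1) * d := by
      rw [div_lt_iff₀ hdpos] at hm2; linarith
    have hmlt : m < 4 * ℓ := by
      rcases Nat.lt_or_ge m (4 * ℓ) with h | h
      · exact h
      · exfalso
        have : ((4 * ℓ : ℕ) : ℝ) ≤ (m : ℝ) := by exact_mod_cast h
        nlinarith [hlt, h2π]
    have hzm : z ∈ Ioo ((m : ℝ) * d) ((m + 1) * d) := ⟨hlt, hlt2⟩
    have hcxm : cond (x m) := hconst m z (x m) hzm (hx' m hmlt) hz.2
    simp only [hF, Set.mem_iUnion]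
    refine ⟨m, ?_, hzm⟩
    rw [hFs, Finset.mem_filter, Finset.mem_range]
    exact ⟨hmlt, (hchi m).mpr hcxm⟩
  have hT0 : volume T = 0 := by
    have : T.Finite := Set.Finite.biUnion (Finset.finite_toSet _)
      (fun m _ => Set.finite_singleton _)
    exact this.measure_zero volume
  have hvol : volume S = volume F := by
    apply le_antisymm
    · calc volume S ≤ volume (F ∪ T) := measure_mono hST
        _ ≤ volume F + volume T := measure_union_le _ _
        _ = volume F := by rw [hT0, add_zero]
    · exact measure_mono hFS
  have hdisj : (↑Fs : Set ℕ).PairwiseDisjoint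
      (fun m : ℕ => Ioo ((m : ℝ) * d) ((m + 1) * d)) := by
    have key : ∀ p q : ℕ, p < q →
        Disjoint (Ioo ((p : ℝ) * d) ((p + 1) * d)) (Ioo ((q : ℝ) * d) ((q + 1) * d)) := by
      intro p q hpq
      apply Set.disjoint_left.mpr
      intro z hz1 hz2
      have h1 : ((p : ℝ) + 1) ≤ (q : ℝ) := by exact_mod_cast hpq
      nlinarith [hz1.2, hz2.1, hdpos]
    intro p _ q _ hpq
    rcases hpq.lt_or_gt with h | h
    · exact key p q h
    · exact (key q p h).symm
  have hvolF : volume F = (Fs.card : ENNReal) * ENNReal.ofReal d := by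
    rw [hF, measure_biUnion_finset hdisj (fun m _ => measurableSet_Ioo)]
    have : ∀ m ∈ Fs, volume (Ioo ((m : ℝ) * d) ((m + 1) * d)) = ENNReal.ofReal d := by
      intro m _
      rw [Real.volume_Ioo]
      congr 1
      ring
    rw [Finset.sum_congr rfl this, Finset.sum_const, nsmul_eq_mul]
  have hSvol : (volume S).toReal = (Fs.card : ℝ) * d := by
    rw [hvol, hvolF, ENNReal.toReal_mul, ENNReal.toReal_ofReal hdpos.le]
    simp
  have hgoal : cosP n a = (volume S).toReal / (2 * π) := by
    rw [cosP, hS]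
  rw [hgoal, hSvol]
  rw [hd]
  have hπ' : π ≠ 0 := hπ.ne'
  have hℓ' : (ℓ : ℝ) ≠ 0 := hℓR.ne'
  field_simp
  ring
end

section
/- Fix a1,...,a_{n-1} ∈ ℕ and let ℓ = lcm(a1,...,a_{n-1}). Let I ⊆ [0,2π] be an interval of length π/(2ℓ) on which all cos(ai x), 1 ≤ i ≤ n−1, have the same strict sign. Then for any an ∈ ℕ, (1/|I|)·|{x ∈ I : all cos(ai x), 1 ≤ i ≤ n, have the same strict sign}| ≥ 1/2 − 2ℓ/an. -/
open MeasureTheory Real Set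

/-!
By the intermediate value theorem the `cos (aᵢ x)` have one common sign on the whole interval
`I`, so it suffices to bound the measure of the part of `I` where `cos (b x + φ) > 0`, with
`φ = 0` or `φ = π`. This set is `2π / b`-periodic and fills exactly half of each period, so an
interval of length `L` meets it in measure at least `(L b / 2π - 1) · π / b = L / 2 - π / b`.
For `L = π / (2ℓ)` this is the fraction `1/2 - 2ℓ/b` of `I`.
-/

theorem Function.Periodic.sub_div_sub_one_mul_le_intervalIntegral {g : ℝ → ℝ} {T : ℝ}
    (hg : Function.Periodic g T) (hT : 0 < T) (hint : IntervalIntegrable g volume 0 T)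
    (hg0 : 0 ≤ g) {u v : ℝ} (huv : u ≤ v) :
    ((v - u) / T - 1) * ∫ x in 0..T, g x ≤ ∫ x in u..v, g x := by
  have hint' := hg.intervalIntegrable₀ hT.ne' hint
  set n : ℕ := ⌊(v - u) / T⌋₊
  have hnT : (n : ℝ) * T ≤ v - u :=
    (le_div_iff₀ hT).1 (Nat.floor_le (div_nonneg (sub_nonneg.2 huv) hT.le))
  have hfull : ∫ x in u..u + (n : ℤ) • T, g x = n * ∫ x in 0..T, g x := by
    rw [hg.intervalIntegral_add_zsmul_eq n u hint', hg.intervalIntegral_add_eq u 0, zero_add,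
      zsmul_eq_mul, Int.cast_natCast]
  have htail : 0 ≤ ∫ x in u + (n : ℤ) • T..v, g x :=
    intervalIntegral.integral_nonneg (by rw [zsmul_eq_mul]; push_cast; linarith) fun x _ => hg0 x
  calc ((v - u) / T - 1) * ∫ x in 0..T, g x
      ≤ n * ∫ x in 0..T, g x :=
        mul_le_mul_of_nonneg_right (by linarith [Nat.lt_floor_add_one ((v - u) / T)])
          (intervalIntegral.integral_nonneg hT.le fun x _ => hg0 x)
    _ ≤ ∫ x in u..v, g x := by
        rw [← intervalIntegral.integral_add_adjacent_intervals (hint' u (u + (n : ℤ) • T))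
          (hint' _ v), hfull]
        linarith

theorem intervalIntegral_indicator_one {S : Set ℝ} (hS : MeasurableSet S) {u v : ℝ}
    (huv : u ≤ v) : ∫ x in u..v, S.indicator 1 x = volume.real (Ioo u v ∩ S) := by
  rw [intervalIntegral.integral_of_le huv, integral_Ioc_eq_integral_Ioo,
    integral_indicator_one hS, measureReal_restrict_apply hS, inter_comm]

theorem measurableSet_cos_pos : MeasurableSet {y : ℝ | 0 < cos y} :=
  measurableSet_lt measurable_const continuous_cos.measurable

theorem periodic_indicator_cos_pos :
    Function.Periodic ({y : ℝ | 0 < cos y}.indicator (1 : ℝ → ℝ)) (2 * π) := by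
  intro y
  simp only [indicator, mem_ofPred_eq, cos_add_two_pi, Pi.one_apply]

theorem cos_pos_inter_Ioo_eq :
    {y : ℝ | 0 < cos y} ∩ Ioo (-(π / 2)) (π + π / 2) = Ioo (-(π / 2)) (π / 2) := by
  ext y
  simp only [mem_inter_iff, mem_ofPred_eq, mem_Ioo]
  constructor
  · rintro ⟨hcos, hlo, hhi⟩
    refine ⟨hlo, lt_of_not_ge fun hy => ?_⟩
    linarith [cos_nonpos_of_pi_div_two_le_of_le hy hhi.le]
  · rintro ⟨hlo, hhi⟩
    exact ⟨cos_pos_of_mem_Ioo ⟨hlo, hhi⟩, hlo, by linarith [pi_pos]⟩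

theorem intervalIntegral_indicator_cos_pos_period :
    ∫ y in 0..2 * π, {y : ℝ | 0 < cos y}.indicator 1 y = π := by
  rw [← zero_add (2 * π), periodic_indicator_cos_pos.intervalIntegral_add_eq 0 (-(π / 2)),
    intervalIntegral_indicator_one measurableSet_cos_pos (by linarith [pi_pos]), inter_comm,
    show -(π / 2) + 2 * π = π + π / 2 by ring, cos_pos_inter_Ioo_eq,
    volume_real_Ioo_of_le (by linarith [pi_pos])]
  ring

theorem sub_div_two_sub_pi_le_intervalIntegral_indicator_cos_pos {u v : ℝ} (huv : u ≤ v) :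
    (v - u) / 2 - π ≤ ∫ y in u..v, {y : ℝ | 0 < cos y}.indicator 1 y := by
  have hint :
      IntervalIntegrable ({y : ℝ | 0 < cos y}.indicator (1 : ℝ → ℝ)) volume 0 (2 * π) :=
    intervalIntegrable_iff.2
      ((integrableOn_const measure_Ioc_lt_top.ne).indicator measurableSet_cos_pos)
  have := periodic_indicator_cos_pos.sub_div_sub_one_mul_le_intervalIntegral two_pi_pos hint
    (indicator_nonneg fun _ _ => zero_le_one) huv
  rw [intervalIntegral_indicator_cos_pos_period] at this
  convert this using 1
  field_simp

theorem sub_div_two_sub_pi_div_le_volume_cos_pos {c : ℝ} (hc : 0 < c) (φ : ℝ) {u v : ℝ}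
    (huv : u ≤ v) :
    (v - u) / 2 - π / c ≤ volume.real {x : ℝ | x ∈ Ioo u v ∧ 0 < cos (c * x + φ)} := by
  have hS : MeasurableSet {x : ℝ | 0 < cos (c * x + φ)} :=
    measurableSet_cos_pos.preimage (by fun_prop)
  have hcu : c * u + φ ≤ c * v + φ := by gcongr
  calc (v - u) / 2 - π / c = c⁻¹ * ((c * v + φ - (c * u + φ)) / 2 - π) := by
        field_simp; ring
    _ ≤ c⁻¹ * ∫ y in c * u + φ..c * v + φ, {y : ℝ | 0 < cos y}.indicator 1 y := by
        gcongr
        exact sub_div_two_sub_pi_le_intervalIntegral_indicator_cos_pos hcu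
    _ = ∫ x in u..v, {y : ℝ | 0 < cos y}.indicator 1 (c * x + φ) :=
        (intervalIntegral.integral_comp_mul_add _ hc.ne' φ).symm
    _ = volume.real {x : ℝ | x ∈ Ioo u v ∧ 0 < cos (c * x + φ)} :=
        intervalIntegral_indicator_one hS huv

theorem IsPreconnected.forall_pos_or_forall_neg {ι X : Type*} [TopologicalSpace X] {s : Set X}
    (hs : IsPreconnected s) {f : ι → X → ℝ} (hf : ∀ i, ContinuousOn (f i) s)
    (h : ∀ x ∈ s, (∀ i, 0 < f i x) ∨ (∀ i, f i x < 0)) :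
    (∀ x ∈ s, ∀ i, 0 < f i x) ∨ (∀ x ∈ s, ∀ i, f i x < 0) := by
  by_contra! ⟨⟨x, hx, i, hxi⟩, ⟨y, hy, j, hyj⟩⟩
  have hneg : ∀ i, f i x < 0 := (h x hx).resolve_left fun hpos => (hpos i).not_ge hxi
  have hpos : ∀ i, 0 < f i y := (h y hy).resolve_right fun hneg => (hneg j).not_ge hyj
  obtain ⟨z, hz, hz0⟩ := hs.intermediate_value hx hy (hf i) ⟨(hneg i).le, (hpos i).le⟩
  rcases h z hz with hz' | hz'
  · exact (hz' i).ne' hz0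
  · exact (hz' i).ne hz0

theorem stmt_10_general (n : ℕ) (a : Fin n → ℕ) (hpos : ∀ i, 0 < a i)
    (ℓ : ℕ) (hℓ : ℓ = Finset.univ.lcm a) (t : ℝ)
    (hsign : ∀ x ∈ Ioo t (t + π / (2 * (ℓ : ℝ))),
      (∀ i, 0 < Real.cos (a i * x)) ∨ (∀ i, Real.cos (a i * x) < 0))
    (b : ℕ) (hb : 0 < b) :
    (volume {x : ℝ | x ∈ Ioo t (t + π / (2 * (ℓ : ℝ))) ∧
        (((∀ i, 0 < Real.cos (a i * x)) ∧ 0 < Real.cos (b * x)) ∨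
          ((∀ i, Real.cos (a i * x) < 0) ∧ Real.cos (b * x) < 0))}).toReal /
        (π / (2 * (ℓ : ℝ))) ≥
      1 / 2 - 2 * (ℓ : ℝ) / b := by
  have hℓ0 : (0 : ℝ) < ℓ := by
    rw [hℓ]
    exact_mod_cast Nat.pos_of_ne_zero (Finset.lcm_ne_zero_iff.2 fun i _ => (hpos i).ne')
  set L := π / (2 * (ℓ : ℝ)) with hL
  set A := {x : ℝ | x ∈ Ioo t (t + L) ∧
    (((∀ i, 0 < Real.cos (a i * x)) ∧ 0 < Real.cos (b * x)) ∨
      ((∀ i, Real.cos (a i * x) < 0) ∧ Real.cos (b * x) < 0))}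
  have hL0 : 0 < L := by positivity
  have hA_le (φ : ℝ) (hφ : ∀ x ∈ Ioo t (t + L), 0 < cos (b * x + φ) → x ∈ A) :
      L / 2 - π / b ≤ volume.real A :=
    calc L / 2 - π / b = (t + L - t) / 2 - π / b := by ring
      _ ≤ volume.real {x : ℝ | x ∈ Ioo t (t + L) ∧ 0 < cos (b * x + φ)} :=
        sub_div_two_sub_pi_div_le_volume_cos_pos (Nat.cast_pos.2 hb) φ (by linarith)
      _ ≤ volume.real A :=
        measureReal_mono (fun x hx => hφ x hx.1 hx.2)
          ((measure_mono fun x hx => hx.1).trans_lt measure_Ioo_lt_top).ne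
  have hA : L / 2 - π / b ≤ volume.real A := by
    rcases isPreconnected_Ioo.forall_pos_or_forall_neg (f := fun i x => cos (a i * x))
      (fun i => by fun_prop) hsign with hall | hall
    · exact hA_le 0 fun x hx hcos => ⟨hx, .inl ⟨hall x hx, by simpa using hcos⟩⟩
    · refine hA_le π fun x hx hcos => ⟨hx, .inr ⟨hall x hx, ?_⟩⟩
      linarith [cos_add_pi (b * x)]
  calc 1 / 2 - 2 * (ℓ : ℝ) / b = (L / 2 - π / b) / L := by rw [hL]; field_simp
    _ ≤ volume.real A / L := by gcongr

theorem stmt_10 (n : ℕ) (a : Fin n → ℕ) (hpos : ∀ i, 0 < a i)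
    (ℓ : ℕ) (hℓ : ℓ = Finset.univ.lcm a) (t : ℝ)
    (hI : Icc t (t + π / (2 * (ℓ : ℝ))) ⊆ Icc 0 (2 * π))
    (hsign : ∀ x ∈ Ioo t (t + π / (2 * (ℓ : ℝ))),
      (∀ i, 0 < Real.cos (a i * x)) ∨ (∀ i, Real.cos (a i * x) < 0))
    (b : ℕ) (hb : 0 < b) :
    (volume {x : ℝ | x ∈ Ioo t (t + π / (2 * (ℓ : ℝ))) ∧
        (((∀ i, 0 < Real.cos (a i * x)) ∧ 0 < Real.cos (b * x)) ∨
          ((∀ i, Real.cos (a i * x) < 0) ∧ Real.cos (b * x) < 0))}).toReal /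
        (π / (2 * (ℓ : ℝ))) ≥
      1 / 2 - 2 * (ℓ : ℝ) / b :=
  stmt_10_general n a hpos ℓ hℓ t hsign b hb
end

section
/- Let a, b be nonzero integers with a/b = p/q in lowest terms, and let γ(t) = (at, bt). If p or q is even, then ∫₀¹ sgn(cos(2π a t)·cos(2π b t)) dt = 0. -/
/-!
Write `a = p k`, `b = q k`. Shifting `t` by `c = 1 / (2k)` shifts the two phases `2π a t`, `2π b t`
by `p π` and `q π`, so the product of cosines picks up the factor `(-1) ^ (p + q) = -1`, as `p + q`
is odd. Hence the integrand is antiperiodic with antiperiod `c`, its integral over any interval of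
length `2c` vanishes, and `[0, 1]` is made of `k` such intervals.
-/

open MeasureTheory Real Set

theorem Real.measurable_sign : Measurable Real.sign :=
  Measurable.ite (measurableSet_lt measurable_id measurable_const) measurable_const
    (Measurable.ite (measurableSet_lt measurable_const measurable_id) measurable_const
      measurable_const)

theorem Real.abs_sign_le_one (x : ℝ) : |Real.sign x| ≤ 1 := by
  rcases Real.sign_apply_eq x with h | h | h <;> norm_num [h]

theorem intervalIntegrable_sign_comp {μ : Measure ℝ} [IsLocallyFiniteMeasure μ] {g : ℝ → ℝ}
    (hg : Measurable g) (t₁ t₂ : ℝ) :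
    IntervalIntegrable (fun t => Real.sign (g t)) μ t₁ t₂ :=
  (intervalIntegrable_const (c := (1 : ℝ))).mono_fun
    (Real.measurable_sign.comp hg).aestronglyMeasurable
    (ae_of_all _ fun t => by simpa using Real.abs_sign_le_one (g t))

namespace Function.Antiperiodic

variable {E : Type*} [NormedAddCommGroup E] [NormedSpace ℝ E] {f : ℝ → E} {c : ℝ}

theorem intervalIntegral_add_two_mul_eq_zero (hf : Antiperiodic f c)
    (h_int : ∀ t₁ t₂, IntervalIntegrable f volume t₁ t₂) (t : ℝ) :
    ∫ x in t..t + 2 * c, f x = 0 := by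
  have hsecond_half : ∫ x in t + c..t + 2 * c, f x = -∫ x in t..t + c, f x := by
    calc ∫ x in t + c..t + 2 * c, f x = ∫ x in t..t + c, f (x + c) := by
          rw [intervalIntegral.integral_comp_add_right]; ring_nf
      _ = ∫ x in t..t + c, -f x := intervalIntegral.integral_congr fun x _ => hf x
      _ = -∫ x in t..t + c, f x := intervalIntegral.integral_neg
  rw [← intervalIntegral.integral_add_adjacent_intervals (h_int t (t + c)) (h_int _ _),
    hsecond_half, add_neg_cancel]

theorem intervalIntegral_add_zsmul_eq_zero (hf : Antiperiodic f c)
    (h_int : ∀ t₁ t₂, IntervalIntegrable f volume t₁ t₂) (n : ℤ) (t : ℝ) :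
    ∫ x in t..t + n • (2 * c), f x = 0 := by
  rw [hf.periodic_two_mul.intervalIntegral_add_zsmul_eq n t h_int,
    hf.intervalIntegral_add_two_mul_eq_zero h_int, smul_zero]

end Function.Antiperiodic

theorem antiperiodic_sign_cos_mul_cos {a b c : ℝ} {p q : ℤ} (hodd : Odd (p + q))
    (ha : 2 * a * c = p) (hb : 2 * b * c = q) :
    Function.Antiperiodic (fun t => Real.sign (cos (2 * π * a * t) * cos (2 * π * b * t))) c := by
  intro t
  have hshift_a : 2 * π * a * (t + c) = 2 * π * a * t + p * π := by rw [← ha]; ring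
  have hshift_b : 2 * π * b * (t + c) = 2 * π * b * t + q * π := by rw [← hb]; ring
  have hsign : (-1 : ℝ) ^ p * (-1) ^ q = -1 := by
    rw [← zpow_add₀ (by norm_num), hodd.neg_one_zpow]
  dsimp only
  rw [hshift_a, hshift_b, cos_add_int_mul_pi, cos_add_int_mul_pi,
    mul_mul_mul_comm, hsign, neg_one_mul, Real.sign_neg]

theorem IsCoprime.exists_eq_mul_of_mul_eq_mul {R : Type*} [CommRing R] [IsDomain R]
    {a b p q : R} (hpq : IsCoprime p q) (ha : a ≠ 0) (h : a * q = b * p) :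
    ∃ k, a = p * k ∧ b = q * k := by
  obtain ⟨k, rfl⟩ : p ∣ a := hpq.dvd_of_dvd_mul_right ⟨b, by rw [h, mul_comm]⟩
  have hp : p ≠ 0 := left_ne_zero_of_mul ha
  refine ⟨k, rfl, mul_left_cancel₀ hp ?_⟩
  linear_combination -h

theorem Int.odd_add_of_isCoprime {p q : ℤ} (hpq : IsCoprime p q) (h : Even p ∨ Even q) :
    Odd (p + q) := by
  rcases h with hp | hq
  · exact hp.add_odd (Int.isCoprime_two_left.mp (hpq.of_isCoprime_of_dvd_left hp.two_dvd))
  · exact (Int.isCoprime_two_right.mp (hpq.of_isCoprime_of_dvd_right hq.two_dvd)).add_even hq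

theorem stmt_12_general (a b p q : ℤ) (ha : a ≠ 0) (hpq : IsCoprime p q)
    (hratio : a * q = b * p) (heven : Even p ∨ Even q) :
    ∫ t in (0:ℝ)..1,
      Real.sign (Real.cos (2 * π * a * t) * Real.cos (2 * π * b * t)) = 0 := by
  obtain ⟨k, rfl, rfl⟩ := hpq.exists_eq_mul_of_mul_eq_mul ha hratio
  have hk : (k : ℝ) ≠ 0 := by exact_mod_cast right_ne_zero_of_mul ha
  have hanti := antiperiodic_sign_cos_mul_cos (a := (p * k : ℤ)) (b := (q * k : ℤ))
    (c := 1 / (2 * k)) (Int.odd_add_of_isCoprime hpq heven) (by push_cast; field_simp) (by push_cast; field_simp)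
  have hunit : (1 : ℝ) = 0 + k • (2 * (1 / (2 * k))) := by rw [zsmul_eq_mul]; field_simp; ring
  rw [hunit]
  exact hanti.intervalIntegral_add_zsmul_eq_zero (intervalIntegrable_sign_comp (by fun_prop)) k 0

theorem stmt_12 (a b p q : ℤ) (ha : a ≠ 0) (hb : b ≠ 0) (hpq : IsCoprime p q)
    (hratio : a * q = b * p) (heven : Even p ∨ Even q) :
    ∫ t in (0:ℝ)..1,
      Real.sign (Real.cos (2 * π * a * t) * Real.cos (2 * π * b * t)) = 0 :=
  stmt_12_general a b p q ha hpq hratio heven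
end

section
/- Let a, b, c be distinct natural numbers with gcd(a,b,c) = 1 and P(a,b,c) ≤ 1/9. Then a, b, c are all odd, and writing a/b = p/q, a/c = r/s, b/c = u/v in lowest terms, we have 1/(pq) + 1/(rs) + 1/(uv) ≥ 5/9. -/
/-!
Write `s_n(x) = sign (cos (n x))`. Off the null set where some `cos` vanishes, the indicator of
"all three signs agree" is `(1 + s_a s_b + s_a s_c + s_b s_c) / 4`, so
`P(a,b,c) = (1 + K(a,b) + K(a,c) + K(b,c)) / 4`, where `K(m,n)` (`cosSignCorr m n`) is the mean
of `s_m s_n` over a period. By periodicity `K(gp, gq) = K(p, q)`, and for coprime `p, q` both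
signs are constant on each of the `4pq` cells `(jπ/2pq, (j+1)π/2pq)`; the resulting sum splits by
the Chinese remainder theorem into a product, giving `K(p,q) = χ₄(p) χ₄(q) / (pq)`.

Hence `K` vanishes on pairs of opposite parity and is always at least `-1/(pq)`. If `a, b, c` are
not all odd then, not being all even, two of the three pairs have opposite parity, and the remaining
term is at least `-1/2`, so `P ≥ 1/8`. If all are odd, `P ≤ 1/9` forces `1 - Σ 1/(pq) ≤ 4/9`.
-/

open MeasureTheory Real Set

open ZMod

-- The sign of `cos` on the cell `(jπ/2n, (j+1)π/2n)`, see `sign_cos_eq_cellSign`.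
def cellSign (n j : ℕ) : ℤ := (-1) ^ ((j + n) / (2 * n))

lemma cellSign_add_mul {n : ℕ} (hn : 0 < n) (j m : ℕ) :
    cellSign n (j + 4 * n * m) = cellSign n j := by
  rw [cellSign, cellSign, show j + 4 * n * m + n = j + n + 2 * m * (2 * n) by ring,
    Nat.add_mul_div_right _ _ (by omega), pow_add, pow_mul]
  simp

lemma cellSign_sq (n j : ℕ) : cellSign n j ^ 2 = 1 := by
  rw [cellSign, ← pow_mul, mul_comm, pow_mul]
  norm_num

lemma cellSign_eq_ite {n j : ℕ} (hj : j < 4 * n) :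
    cellSign n j = if n ≤ j ∧ j < 3 * n then -1 else 1 := by
  rw [cellSign]
  split_ifs with h
  · rw [Nat.div_eq_of_lt_le (k := 1) (by omega) (by omega)]; norm_num
  · rcases Nat.lt_or_ge j n with hjn | hjn
    · rw [Nat.div_eq_of_lt (by omega)]; norm_num
    · rw [Nat.div_eq_of_lt_le (k := 2) (by omega) (by omega)]; norm_num

lemma sum_cellSign_four_mul_add {n d : ℕ} (hd : d < 4) :
    ∑ i ∈ Finset.range n, cellSign n (4 * i + d) = χ₄ n * cellSign 1 d := by
  have hterm : ∀ i ∈ Finset.range n, cellSign n (4 * i + d) =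
      1 - 2 * if n ≤ 4 * i + d ∧ 4 * i + d < 3 * n then 1 else 0 := by
    intro i hi
    rw [cellSign_eq_ite (by simp at hi; omega)]
    split_ifs <;> norm_num
  have hcount : (Finset.range n).filter (fun i => n ≤ 4 * i + d ∧ 4 * i + d < 3 * n)
      = Finset.Ico ((n + 3 - d) / 4) ((3 * n + 3 - d) / 4) := by
    ext i
    simp only [Finset.mem_filter, Finset.mem_range, Finset.mem_Ico]
    omega
  rw [Finset.sum_congr rfl hterm, Finset.sum_sub_distrib, ← Finset.mul_sum, Finset.sum_boole,
    hcount, Nat.card_Ico, χ₄_nat_eq_if_mod_four]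
  interval_cases d <;> simp [cellSign] <;> omega

lemma Finset.sum_range_mul_eq_sum_sum {M : Type*} [AddCommMonoid M] (m n : ℕ) (f : ℕ → M) :
    ∑ j ∈ Finset.range (m * n), f j =
      ∑ d ∈ Finset.range m, ∑ k ∈ Finset.range n, f (m * k + d) := by
  rw [← Finset.sum_product']
  refine Finset.sum_nbij' (fun j => (j % m, j / m)) (fun dk => m * dk.2 + dk.1) ?_ ?_ ?_ ?_ ?_
  · intro j hj
    simp only [Finset.mem_product, Finset.mem_range] at hj ⊢
    have hm : 0 < m := Nat.pos_of_ne_zero (by rintro rfl; simp at hj)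
    exact ⟨Nat.mod_lt _ hm, Nat.div_lt_of_lt_mul hj⟩
  · rintro ⟨d, k⟩ hdk
    simp only [Finset.mem_product, Finset.mem_range] at hdk ⊢
    nlinarith
  · intro j _
    exact Nat.div_add_mod j m
  · rintro ⟨d, k⟩ hdk
    simp only [Finset.mem_product, Finset.mem_range] at hdk
    simp [Nat.mul_add_div (show 0 < m by omega), Nat.mod_eq_of_lt hdk.1,
      Nat.div_eq_of_lt hdk.1]
  · intro j _
    rw [Nat.div_add_mod]

lemma Finset.sum_range_mul_mod_mul_mod {M : Type*} [CommSemiring M] {p q : ℕ} (h : p.Coprime q)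
    (f g : ℕ → M) :
    ∑ k ∈ Finset.range (p * q), f (k % p) * g (k % q)
      = (∑ i ∈ Finset.range p, f i) * ∑ j ∈ Finset.range q, g j := by
  obtain rfl | hp := p.eq_zero_or_pos
  · simp
  obtain rfl | hq := q.eq_zero_or_pos
  · simp
  rw [Finset.sum_mul_sum, ← Finset.sum_product']
  refine Finset.sum_nbij' (fun k => (k % p, k % q)) (fun ij => Nat.chineseRemainder h ij.1 ij.2)
    ?_ ?_ ?_ ?_ fun _ _ => rfl
  · intro k _
    simp only [Finset.mem_product, Finset.mem_range]
    exact ⟨Nat.mod_lt _ hp, Nat.mod_lt _ hq⟩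
  · intro ij _
    simpa only [Finset.mem_range] using Nat.chineseRemainder_lt_mul h _ _ hp.ne' hq.ne'
  · intro k hk
    simp only [Finset.mem_range] at hk
    exact (Nat.chineseRemainder_modEq_unique h (Nat.mod_modEq k p).symm
      (Nat.mod_modEq k q).symm).symm.eq_of_lt_of_lt
      (Nat.chineseRemainder_lt_mul h _ _ hp.ne' hq.ne') hk
  · rintro ⟨i, j⟩ hij
    simp only [Finset.mem_product, Finset.mem_range] at hij
    have hc := (Nat.chineseRemainder h i j).prop
    exact Prod.ext (Eq.trans hc.1 (Nat.mod_eq_of_lt hij.1)) (Eq.trans hc.2 (Nat.mod_eq_of_lt hij.2))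

lemma sum_cellSign_mul_cellSign {p q : ℕ} (hp : 0 < p) (hq : 0 < q) (h : p.Coprime q) :
    ∑ j ∈ Finset.range (4 * (p * q)), cellSign p j * cellSign q j =
      4 * (χ₄ p * χ₄ q) := by
  have hperiod : ∀ n k d : ℕ, 0 < n →
      cellSign n (4 * k + d) = cellSign n (4 * (k % n) + d) := by
    intro n k d hn
    conv_rhs => rw [← cellSign_add_mul hn _ (k / n)]
    rw [show 4 * (k % n) + d + 4 * n * (k / n) = 4 * (n * (k / n) + k % n) + d by ring,
      Nat.div_add_mod]
  -- Writing `j = 4k + d`, the two factors depend only on `k mod p` and `k mod q`.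
  have hd : ∀ d ∈ Finset.range 4,
      ∑ k ∈ Finset.range (p * q), cellSign p (4 * k + d) * cellSign q (4 * k + d) =
        χ₄ p * χ₄ q * (cellSign 1 d) ^ 2 := by
    intro d hd4
    rw [Finset.sum_congr rfl fun k _ => by rw [hperiod p k d hp, hperiod q k d hq],
      Finset.sum_range_mul_mod_mul_mod h (fun i => cellSign p (4 * i + d))
        (fun i => cellSign q (4 * i + d)),
      sum_cellSign_four_mul_add (Finset.mem_range.1 hd4),
      sum_cellSign_four_mul_add (Finset.mem_range.1 hd4)]
    ring
  rw [Finset.sum_range_mul_eq_sum_sum, Finset.sum_congr rfl hd, ← Finset.mul_sum]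
  simp only [cellSign_sq, Finset.sum_const, Finset.card_range, nsmul_eq_mul]
  ring

noncomputable def cosSign (n : ℕ) (x : ℝ) : ℝ := Real.sign (Real.cos (n * x))

noncomputable def cosSignCorr (m n : ℕ) : ℝ :=
  (∫ x in (0 : ℝ)..2 * π, cosSign m x * cosSign n x) / (2 * π)

lemma measurable_cosSign (n : ℕ) : Measurable (cosSign n) := by
  have hsign : Measurable Real.sign :=
    Measurable.ite measurableSet_Iio measurable_const
      (Measurable.ite measurableSet_Ioi measurable_const measurable_const)
  exact hsign.comp (by fun_prop)

lemma abs_cosSign_le_one (n : ℕ) (x : ℝ) : |cosSign n x| ≤ 1 := by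
  rcases Real.sign_apply_eq (Real.cos (n * x)) with h | h | h <;> simp [cosSign, h]

lemma intervalIntegrable_cosSign_mul (m n : ℕ) (s t : ℝ) :
    IntervalIntegrable (fun x => cosSign m x * cosSign n x) volume s t := by
  refine (intervalIntegrable_iff).2 <| IntegrableOn.of_bound measure_Ioc_lt_top
    ((measurable_cosSign m).mul (measurable_cosSign n)).aestronglyMeasurable 1
    (ae_of_all _ fun x => ?_)
  rw [Real.norm_eq_abs, abs_mul]
  exact mul_le_one₀ (abs_cosSign_le_one m x) (abs_nonneg _) (abs_cosSign_le_one n x)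

lemma sign_cos_of_mem_Ioo {k : ℕ} {t : ℝ} (ht : t ∈ Ioo (k * π - π / 2) (k * π + π / 2)) :
    Real.sign (Real.cos t) = (-1) ^ k := by
  have hpos : 0 < Real.cos (t - k * π) :=
    cos_pos_of_mem_Ioo ⟨by linarith [ht.1], by linarith [ht.2]⟩
  rw [show t = t - k * π + k * π by ring, cos_add_nat_mul_pi]
  rcases Nat.even_or_odd k with hk | hk
  · rw [hk.neg_one_pow, one_mul, Real.sign_of_pos hpos]
  · rw [hk.neg_one_pow, neg_one_mul, Real.sign_neg, Real.sign_of_pos hpos]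

lemma sign_cos_eq_cellSign {n j : ℕ} (hn : 0 < n) {t : ℝ}
    (ht : t ∈ Ioo (j * π / (2 * n)) ((j + 1) * π / (2 * n))) :
    Real.sign (Real.cos t) = cellSign n j := by
  have hlo := Nat.mul_div_le (j + n) (2 * n)
  have hhi := Nat.lt_mul_div_succ (j + n) (show 0 < 2 * n by omega)
  rw [cellSign, Int.cast_pow, Int.cast_neg, Int.cast_one]
  generalize (j + n) / (2 * n) = k at hlo hhi ⊢
  have hlo' : (2 * n * k : ℝ) ≤ j + n := by exact_mod_cast hlo
  have hhi' : (j + n + 1 : ℝ) ≤ 2 * n * (k + 1) := by exact_mod_cast Nat.succ_le_of_lt hhi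
  have hn' : (0 : ℝ) < n := by exact_mod_cast hn
  refine sign_cos_of_mem_Ioo ⟨lt_of_le_of_lt ?_ ht.1, ht.2.trans_le ?_⟩
  · rw [le_div_iff₀ (by positivity)]; nlinarith [pi_pos]
  · rw [div_le_iff₀ (by positivity)]; nlinarith [pi_pos]

lemma cosSign_mul_cosSign_eqOn_cell {m n : ℕ} (hm : 0 < m) (hn : 0 < n) (j : ℕ) :
    EqOn (fun x => cosSign m x * cosSign n x) (fun _ => ((cellSign m j * cellSign n j : ℤ) : ℝ))
      (Ioo (j * (π / (2 * m * n))) ((j + 1) * (π / (2 * m * n)))) := by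
  intro x hx
  have hm' : (0 : ℝ) < m := by exact_mod_cast hm
  have hn' : (0 : ℝ) < n := by exact_mod_cast hn
  have hcell : ∀ {k l : ℕ} {y : ℝ}, (0 : ℝ) < k → (0 : ℝ) < l →
      y ∈ Ioo (j * (π / (2 * k * l))) ((j + 1) * (π / (2 * k * l))) →
      k * y ∈ Ioo (j * π / (2 * l)) ((j + 1) * π / (2 * l)) := by
    intro k l y hk hl hy
    have e : ∀ c : ℝ, c * π / (2 * l) = k * (c * (π / (2 * k * l))) := fun c => by field_simp
    rw [e, e]
    exact ⟨mul_lt_mul_of_pos_left hy.1 hk, mul_lt_mul_of_pos_left hy.2 hk⟩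
  simp only [cosSign, Int.cast_mul]
  have hx' : x ∈ Ioo (j * (π / (2 * n * m))) ((j + 1) * (π / (2 * n * m))) := by
    rwa [mul_right_comm (2 : ℝ) (n : ℝ)]
  rw [sign_cos_eq_cellSign hn (hcell hm' hn' hx), sign_cos_eq_cellSign hm (hcell hn' hm' hx'),
    mul_comm]

lemma cosSignCorr_eq_sum {m n : ℕ} (hm : 0 < m) (hn : 0 < n) :
    cosSignCorr m n =
      ((∑ j ∈ Finset.range (4 * (m * n)), cellSign m j * cellSign n j : ℤ) : ℝ) /
        (4 * (m * n)) := by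
  set δ := π / (2 * m * n)
  have hcells := intervalIntegral.sum_integral_adjacent_intervals (a := fun k : ℕ => k * δ)
    (n := 4 * (m * n)) (μ := volume) fun k _ => intervalIntegrable_cosSign_mul m n _ _
  have hend : ((4 * (m * n) : ℕ) : ℝ) * δ = 2 * π := by
    simp only [δ]; push_cast; field_simp; ring
  simp only [Nat.cast_zero, zero_mul, hend] at hcells
  have hcell : ∀ j : ℕ, ∫ x in j * δ..(j + 1 : ℕ) * δ, cosSign m x * cosSign n x =
      δ * ((cellSign m j * cellSign n j : ℤ) : ℝ) := by
    intro j
    rw [Nat.cast_succ, intervalIntegral.integral_congr_Ioo_of_le (by gcongr; simp)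
      (cosSign_mul_cosSign_eqOn_cell hm hn j), intervalIntegral.integral_const, smul_eq_mul]
    ring
  rw [cosSignCorr, ← hcells, Finset.sum_congr rfl fun j _ => hcell j, ← Finset.mul_sum]
  push_cast
  simp only [δ]
  field_simp
  ring

lemma periodic_cosSign (n : ℕ) : Function.Periodic (cosSign n) (2 * π) := by
  intro x
  rw [cosSign, cosSign, mul_add, cos_add_nat_mul_two_pi]

lemma cosSignCorr_mul_left {g : ℕ} (hg : 0 < g) (m n : ℕ) :
    cosSignCorr (g * m) (g * n) = cosSignCorr m n := by
  have hg' : (g : ℝ) ≠ 0 := by positivity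
  have hscale : ∀ k : ℕ, cosSign (g * k) = fun x => cosSign k (g * x) := fun k => by
    ext x; simp only [cosSign]; push_cast; ring_nf
  have hper := (periodic_cosSign m).mul (periodic_cosSign n)
  have hmul := hper.intervalIntegral_add_zsmul_eq g 0 (intervalIntegrable_cosSign_mul m n)
  simp only [zero_add, zsmul_eq_mul, Int.cast_natCast, Pi.mul_apply] at hmul
  simp only [cosSignCorr, hscale, intervalIntegral.integral_comp_mul_left
    (fun x => cosSign m x * cosSign n x) hg', mul_zero, hmul, smul_eq_mul,
    inv_mul_cancel_left₀ hg']

lemma volume_cos_mul_eq_zero (n : ℕ) : volume {x : ℝ | Real.cos (n * x) = 0} = 0 := by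
  rcases n.eq_zero_or_pos with rfl | hn
  · simp
  refine measure_mono_null (fun x hx => ?_)
    ((countable_range fun k : ℤ => (2 * k + 1) * π / 2 / n).measure_zero _)
  obtain ⟨k, hk⟩ := Real.cos_eq_zero_iff.mp hx
  exact ⟨k, by simp only; rw [← hk]; field_simp⟩

lemma ite_sameSign_eq {u v w : ℝ} (hu : u ≠ 0) (hv : v ≠ 0) (hw : w ≠ 0) :
    (if (0 < u ∧ 0 < v ∧ 0 < w) ∨ (u < 0 ∧ v < 0 ∧ w < 0) then (1 : ℝ) else 0) =
      (1 + Real.sign u * Real.sign v + Real.sign u * Real.sign w +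
        Real.sign v * Real.sign w) / 4 := by
  rcases hu.lt_or_gt with hu | hu <;> rcases hv.lt_or_gt with hv | hv <;>
    rcases hw.lt_or_gt with hw | hw <;>
    norm_num [Real.sign_of_pos, Real.sign_of_neg, hu, hv, hw, hu.not_gt, hv.not_gt, hw.not_gt]

lemma cosP_three_eq (a b c : ℕ) :
    cosP 3 ![a, b, c] = (1 + cosSignCorr a b + cosSignCorr a c + cosSignCorr b c) / 4 := by
  set S := {x : ℝ |
    (∀ i, 0 < Real.cos (![a, b, c] i * x)) ∨ ∀ i, Real.cos (![a, b, c] i * x) < 0}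
  have hS : MeasurableSet S := by
    simp only [S, Fin.forall_fin_succ]
    measurability
  have hcos : ∀ n : ℕ, ∀ᵐ x ∂volume, Real.cos (n * x) ≠ 0 := fun n => by
    simpa [ae_iff] using volume_cos_mul_eq_zero n
  have hae : ∀ᵐ x ∂volume, S.indicator 1 x =
      (1 + cosSign a x * cosSign b x + cosSign a x * cosSign c x +
        cosSign b x * cosSign c x) / 4 := by
    filter_upwards [hcos a, hcos b, hcos c] with x ha hb hc
    simp only [Set.indicator_apply, S, mem_ofPred_eq, Fin.forall_fin_succ, IsEmpty.forall_iff,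
      and_true, Pi.one_apply, Matrix.cons_val_zero, Matrix.cons_val_succ, cosSign]
    convert ite_sameSign_eq ha hb hc using 1
  calc cosP 3 ![a, b, c] = (∫ x in (0 : ℝ)..2 * π, S.indicator 1 x) / (2 * π) := by
        rw [cosP, intervalIntegral.integral_of_le (by positivity : (0 : ℝ) ≤ 2 * π),
          ← integral_Icc_eq_integral_Ioc, integral_indicator_one hS,
          measureReal_restrict_apply hS, inter_comm]
        rfl
    _ = (∫ x in (0 : ℝ)..2 * π, (1 + cosSign a x * cosSign b x + cosSign a x * cosSign c x +
          cosSign b x * cosSign c x) / 4) / (2 * π) := by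
        rw [intervalIntegral.integral_congr_ae (hae.mono fun x hx _ => hx)]
    _ = _ := by
        have hab := intervalIntegrable_cosSign_mul a b 0 (2 * π)
        have hac := intervalIntegrable_cosSign_mul a c 0 (2 * π)
        have hbc := intervalIntegrable_cosSign_mul b c 0 (2 * π)
        rw [intervalIntegral.integral_div,
          intervalIntegral.integral_add ((intervalIntegrable_const.add hab).add hac) hbc,
          intervalIntegral.integral_add (intervalIntegrable_const.add hab) hac,
          intervalIntegral.integral_add intervalIntegrable_const hab,
          intervalIntegral.integral_const, cosSignCorr, cosSignCorr, cosSignCorr]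
        field_simp
        ring

lemma exists_eq_mul_of_mul_eq_mul {a b p q : ℕ} (hp : 0 < p) (hpq : p.Coprime q)
    (h : a * q = b * p) : ∃ g, a = g * p ∧ b = g * q := by
  obtain ⟨g, rfl⟩ := hpq.dvd_of_dvd_mul_right ⟨b, by rw [h, mul_comm]⟩
  exact ⟨g, mul_comm p g, Nat.eq_of_mul_eq_mul_right hp (by rw [← h]; ring)⟩

lemma cosSignCorr_of_coprime {p q : ℕ} (hp : 0 < p) (hq : 0 < q) (h : p.Coprime q) :
    cosSignCorr p q = χ₄ p * χ₄ q / (p * q) := by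
  rw [cosSignCorr_eq_sum hp hq, sum_cellSign_mul_cellSign hp hq h]
  push_cast
  field_simp

lemma cosSignCorr_eq_of_mul_eq_mul {a b p q : ℕ} (ha : 0 < a) (hp : 0 < p) (hq : 0 < q)
    (hpq : p.Coprime q) (h : a * q = b * p) : cosSignCorr a b = χ₄ p * χ₄ q / (p * q) := by
  obtain ⟨g, rfl, rfl⟩ := exists_eq_mul_of_mul_eq_mul hp hpq h
  rw [cosSignCorr_mul_left (Nat.pos_of_mul_pos_right ha), cosSignCorr_of_coprime hp hq hpq]

lemma neg_one_le_χ₄_mul_χ₄ (p q : ℕ) : (-1 : ℝ) ≤ χ₄ p * χ₄ q := by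
  rw [← Int.cast_mul, ← map_mul]
  rcases isQuadratic_χ₄ (p * q) with h | h | h <;> simp [h]

lemma neg_inv_le_cosSignCorr {a b p q : ℕ} (ha : 0 < a) (hp : 0 < p) (hq : 0 < q)
    (hpq : p.Coprime q) (h : a * q = b * p) : -(1 / (p * q : ℝ)) ≤ cosSignCorr a b := by
  rw [cosSignCorr_eq_of_mul_eq_mul ha hp hq hpq h, ← neg_div]
  exact div_le_div_of_nonneg_right (neg_one_le_χ₄_mul_χ₄ p q) (by positivity)

lemma neg_half_le_cosSignCorr {a b p q : ℕ} (ha : 0 < a) (hp : 0 < p) (hq : 0 < q)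
    (hpq : p.Coprime q) (h : a * q = b * p) (hab : a ≠ b) :
    -(1 / 2 : ℝ) ≤ cosSignCorr a b := by
  have hne : p ≠ q := by
    rintro rfl
    exact hab (Nat.eq_of_mul_eq_mul_right hp h)
  have h2 : (2 : ℝ) ≤ p * q := by
    exact_mod_cast (show 2 ≤ p * q by rcases hne.lt_or_gt with h' | h' <;> nlinarith)
  refine le_trans ?_ (neg_inv_le_cosSignCorr ha hp hq hpq h)
  gcongr

lemma cosSignCorr_eq_zero_of_mod_two_ne {a b p q : ℕ} (ha : 0 < a) (hp : 0 < p) (hq : 0 < q)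
    (hpq : p.Coprime q) (h : a * q = b * p) (hpar : a % 2 ≠ b % 2) : cosSignCorr a b = 0 := by
  have heven : p % 2 = 0 ∨ q % 2 = 0 := by
    by_contra! hodd
    have h2 := congrArg (· % 2) h
    simp only [Nat.mul_mod a, Nat.mul_mod b, show p % 2 = 1 by omega, show q % 2 = 1 by omega,
      mul_one, Nat.mod_mod] at h2
    exact hpar h2
  rw [cosSignCorr_eq_of_mul_eq_mul ha hp hq hpq h]
  rcases heven with h' | h'
  · rw [χ₄_nat_eq_if_mod_four p, if_pos h']; simp
  · rw [χ₄_nat_eq_if_mod_four q, if_pos h']; simp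

lemma two_pairs_of_opposite_parity {a b c : ℕ} (hgcd : Nat.gcd a (Nat.gcd b c) = 1)
    (h : ¬(Odd a ∧ Odd b ∧ Odd c)) :
    (a % 2 ≠ b % 2 ∧ a % 2 ≠ c % 2) ∨ (a % 2 ≠ b % 2 ∧ b % 2 ≠ c % 2) ∨
      (a % 2 ≠ c % 2 ∧ b % 2 ≠ c % 2) := by
  have hnot_even : ¬(2 ∣ a ∧ 2 ∣ b ∧ 2 ∣ c) := fun ⟨ha, hb, hc⟩ => by
    simpa [hgcd] using Nat.dvd_gcd ha (Nat.dvd_gcd hb hc)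
  simp only [Nat.odd_iff] at h
  omega

theorem stmt_15_general (a b c : ℕ) (ha : 0 < a) (hb : 0 < b)
    (hab : a ≠ b) (hac : a ≠ c) (hbc : b ≠ c)
    (hgcd : Nat.gcd a (Nat.gcd b c) = 1) (hP : cosP 3 ![a, b, c] ≤ 1 / 9)
    (p q r s u v : ℕ) (hp : 0 < p) (hq : 0 < q) (hr : 0 < r) (hs : 0 < s)
    (hu : 0 < u) (hv : 0 < v)
    (hpq : Nat.Coprime p q) (hrs : Nat.Coprime r s) (huv : Nat.Coprime u v)
    (h1 : a * q = b * p) (h2 : a * s = c * r) (h3 : b * v = c * u) :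
    (Odd a ∧ Odd b ∧ Odd c) ∧
      1 / ((p : ℝ) * q) + 1 / ((r : ℝ) * s) + 1 / ((u : ℝ) * v) ≥ 5 / 9 := by
  have hsum : 1 + cosSignCorr a b + cosSignCorr a c + cosSignCorr b c ≤ 4 / 9 := by
    rw [cosP_three_eq] at hP
    linarith
  have hodd : Odd a ∧ Odd b ∧ Odd c := by
    by_contra hnot
    have hab' := neg_half_le_cosSignCorr ha hp hq hpq h1 hab
    have hac' := neg_half_le_cosSignCorr ha hr hs hrs h2 hac
    have hbc' := neg_half_le_cosSignCorr hb hu hv huv h3 hbc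
    rcases two_pairs_of_opposite_parity hgcd hnot with
      ⟨hab2, hac2⟩ | ⟨hab2, hbc2⟩ | ⟨hac2, hbc2⟩
    · linarith [cosSignCorr_eq_zero_of_mod_two_ne ha hp hq hpq h1 hab2,
        cosSignCorr_eq_zero_of_mod_two_ne ha hr hs hrs h2 hac2]
    · linarith [cosSignCorr_eq_zero_of_mod_two_ne ha hp hq hpq h1 hab2,
        cosSignCorr_eq_zero_of_mod_two_ne hb hu hv huv h3 hbc2]
    · linarith [cosSignCorr_eq_zero_of_mod_two_ne ha hr hs hrs h2 hac2,
        cosSignCorr_eq_zero_of_mod_two_ne hb hu hv huv h3 hbc2]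
  refine ⟨hodd, ?_⟩
  linarith [neg_inv_le_cosSignCorr ha hp hq hpq h1, neg_inv_le_cosSignCorr ha hr hs hrs h2,
    neg_inv_le_cosSignCorr hb hu hv huv h3]

theorem stmt_15 (a b c : ℕ) (ha : 0 < a) (hb : 0 < b) (hc : 0 < c)
    (hab : a ≠ b) (hac : a ≠ c) (hbc : b ≠ c)
    (hgcd : Nat.gcd a (Nat.gcd b c) = 1) (hP : cosP 3 ![a, b, c] ≤ 1 / 9)
    (p q r s u v : ℕ) (hp : 0 < p) (hq : 0 < q) (hr : 0 < r) (hs : 0 < s)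
    (hu : 0 < u) (hv : 0 < v)
    (hpq : Nat.Coprime p q) (hrs : Nat.Coprime r s) (huv : Nat.Coprime u v)
    (h1 : a * q = b * p) (h2 : a * s = c * r) (h3 : b * v = c * u) :
    (Odd a ∧ Odd b ∧ Odd c) ∧
      1 / ((p : ℝ) * q) + 1 / ((r : ℝ) * s) + 1 / ((u : ℝ) * v) ≥ 5 / 9 :=
  stmt_15_general a b c ha hb hab hac hbc hgcd hP p q r s u v hp hq hr hs hu hv hpq hrs huv h1 h2 h3
end

section
/- P(3, 5, 15) > 1/9. -/
open MeasureTheory Real Set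

lemma cos_pos_shift (y : ℝ) (n : ℤ) (h1 : -(π/2) < y - n*(2*π)) (h2 : y - n*(2*π) < π/2) :
    0 < Real.cos y := by
  have := Real.cos_sub_int_mul_two_pi y n
  rw [← this]
  exact Real.cos_pos_of_mem_Ioo ⟨h1, h2⟩

lemma cos_neg_shift (y : ℝ) (n : ℤ) (h1 : π/2 < y - n*(2*π)) (h2 : y - n*(2*π) < π + π/2) :
    Real.cos y < 0 := by
  have := Real.cos_sub_int_mul_two_pi y n
  rw [← this]
  exact Real.cos_neg_of_pi_div_two_lt_of_lt h1 h2

theorem stmt_17 : cosP 3 ![3, 5, 15] > 1 / 9 := by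
  have pi_pos := Real.pi_pos
  set S : Set ℝ := {x : ℝ | x ∈ Icc 0 (2 * π) ∧
    ((∀ i, 0 < Real.cos ((![3, 5, 15] : Fin 3 → ℕ) i * x)) ∨
     (∀ i, Real.cos ((![3, 5, 15] : Fin 3 → ℕ) i * x) < 0))} with hS
  have hsub : Ioo (π/6) (7*π/30) ∪ Ioo (23*π/30) (5*π/6) ∪ Ioo (29*π/30) (31*π/30)
      ∪ Ioo (7*π/6) (37*π/30) ⊆ S := by
    intro x hx
    rcases hx with ((hx | hx) | hx) | hx <;> obtain ⟨h1, h2⟩ := hx <;>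
      refine ⟨⟨by linarith, by linarith⟩, ?_⟩
    · refine Or.inr (fun i => ?_)
      fin_cases i
      · show Real.cos (((3:ℕ):ℝ) * x) < 0
        exact cos_neg_shift _ 0 (by push_cast; linarith) (by push_cast; linarith)
      · show Real.cos (((5:ℕ):ℝ) * x) < 0
        exact cos_neg_shift _ 0 (by push_cast; linarith) (by push_cast; linarith)
      · show Real.cos (((15:ℕ):ℝ) * x) < 0
        exact cos_neg_shift _ 1 (by push_cast; linarith) (by push_cast; linarith)
    · refine Or.inl (fun i => ?_)
      fin_cases i
      · show 0 < Real.cos (((3:ℕ):ℝ) * x)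
        exact cos_pos_shift _ 1 (by push_cast; linarith) (by push_cast; linarith)
      · show 0 < Real.cos (((5:ℕ):ℝ) * x)
        exact cos_pos_shift _ 2 (by push_cast; linarith) (by push_cast; linarith)
      · show 0 < Real.cos (((15:ℕ):ℝ) * x)
        exact cos_pos_shift _ 6 (by push_cast; linarith) (by push_cast; linarith)
    · refine Or.inr (fun i => ?_)
      fin_cases i
      · show Real.cos (((3:ℕ):ℝ) * x) < 0
        exact cos_neg_shift _ 1 (by push_cast; linarith) (by push_cast; linarith)
      · show Real.cos (((5:ℕ):ℝ) * x) < 0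
        exact cos_neg_shift _ 2 (by push_cast; linarith) (by push_cast; linarith)
      · show Real.cos (((15:ℕ):ℝ) * x) < 0
        exact cos_neg_shift _ 7 (by push_cast; linarith) (by push_cast; linarith)
    · refine Or.inl (fun i => ?_)
      fin_cases i
      · show 0 < Real.cos (((3:ℕ):ℝ) * x)
        exact cos_pos_shift _ 2 (by push_cast; linarith) (by push_cast; linarith)
      · show 0 < Real.cos (((5:ℕ):ℝ) * x)
        exact cos_pos_shift _ 3 (by push_cast; linarith) (by push_cast; linarith)
      · show 0 < Real.cos (((15:ℕ):ℝ) * x)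
        exact cos_pos_shift _ 9 (by push_cast; linarith) (by push_cast; linarith)
  have hvol : ENNReal.ofReal (4*π/15) ≤ volume S := by
    have hU : volume (Ioo (π/6) (7*π/30) ∪ Ioo (23*π/30) (5*π/6) ∪ Ioo (29*π/30) (31*π/30)
        ∪ Ioo (7*π/6) (37*π/30)) = ENNReal.ofReal (4*π/15) := by
      rw [measure_union (by
            refine Set.disjoint_left.mpr fun x hx hx' => ?_
            obtain ⟨h1', h2'⟩ := hx'
            rcases hx with (hx | hx) | hx <;> linarith [hx.2])
          measurableSet_Ioo,
        measure_union (by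
            refine Set.disjoint_left.mpr fun x hx hx' => ?_
            obtain ⟨h1', h2'⟩ := hx'
            rcases hx with hx | hx <;> linarith [hx.2])
          measurableSet_Ioo,
        measure_union (by
            refine Set.disjoint_left.mpr fun x hx hx' => ?_
            obtain ⟨h1', h2'⟩ := hx'
            linarith [hx.2])
          measurableSet_Ioo]
      rw [Real.volume_Ioo, Real.volume_Ioo, Real.volume_Ioo, Real.volume_Ioo]
      rw [← ENNReal.ofReal_add (by linarith) (by linarith),
          ← ENNReal.ofReal_add (by linarith) (by linarith),
          ← ENNReal.ofReal_add (by linarith) (by linarith)]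
      congr 1
      ring
    calc ENNReal.ofReal (4*π/15) = _ := hU.symm
      _ ≤ volume S := measure_mono hsub
  have hfin : volume S ≠ ⊤ := by
    have : volume S ≤ volume (Icc (0:ℝ) (2*π)) := measure_mono (fun x hx => hx.1)
    rw [Real.volume_Icc] at this
    exact ne_top_of_le_ne_top ENNReal.ofReal_ne_top this
  have htr : (4*π/15 : ℝ) ≤ (volume S).toReal := by
    have := ENNReal.toReal_mono hfin hvol
    rwa [ENNReal.toReal_ofReal (by linarith)] at this
  have hP : cosP 3 ![3, 5, 15] = (volume S).toReal / (2 * π) := rfl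
  rw [hP, gt_iff_lt, div_lt_div_iff₀ (by norm_num) (by linarith)]
  nlinarith [htr]
end

section
/- P(1, 3, 11, 33) = 1/33 and P(1, 3, 9, 27) = 1/27; in particular P(1,3,11,33) < P(1,3,9,27). -/
open MeasureTheory Real Set

lemma cosA {θ : ℝ} (h1 : 0 < Real.cos θ) (h3 : 0 < Real.cos (3 * θ)) :
    Real.sqrt 3 / 2 < Real.cos θ := by
  have h := Real.cos_three_mul θ
  by_contra h'
  push_neg at h'
  have hs : Real.sqrt 3 ^ 2 = 3 := Real.sq_sqrt (by norm_num)
  have hq : Real.cos θ ^ 2 ≤ 3 / 4 := by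
    nlinarith [Real.sqrt_nonneg 3, mul_nonneg (sub_nonneg.2 h') h1.le]
  nlinarith [mul_pos h1 h1, mul_nonneg (sub_nonneg.2 (by linarith : Real.cos θ ^ 2 ≤ 3/4)) h1.le]

lemma cosB {θ : ℝ} (h0 : 0 ≤ θ) (hπ : θ ≤ π) (h : Real.sqrt 3 / 2 < Real.cos θ) :
    θ < π / 6 := by
  by_contra h'
  push_neg at h'
  have := Real.cos_le_cos_of_nonneg_of_le_pi (by positivity) hπ h'
  rw [Real.cos_pi_div_six] at this
  linarith

lemma cos_nat_two_pi_sub (a : ℕ) (y : ℝ) :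
    Real.cos (a * (2 * π - y)) = Real.cos (a * y) := by
  have h : (a : ℝ) * (2 * π - y) = (a : ℤ) * (2 * π) - a * y := by push_cast; ring
  rw [h, Real.cos_int_mul_two_pi_sub]

lemma cos_odd_pi_add (a : ℕ) (ha : Odd a) (t : ℝ) :
    Real.cos (a * (π + t)) = - Real.cos (a * t) := by
  obtain ⟨k, hk⟩ := ha
  have h : (a : ℝ) * (π + t) = (π + a * t) + (k : ℤ) * (2 * π) := by
    push_cast [hk]; ring
  rw [h, Real.cos_add_int_mul_two_pi]
  simp [Real.cos_add]

lemma core1 (z : ℝ) (h0 : 0 ≤ z) (h1 : z ≤ π) :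
    (0 < Real.cos z ∧ 0 < Real.cos (3 * z) ∧ 0 < Real.cos (11 * z) ∧
      0 < Real.cos (33 * z)) ↔ z < π / 66 := by
  have hπ := Real.pi_pos
  constructor
  · rintro ⟨c1, c3, c11, c33⟩
    have hz6 : z < π / 6 := cosB h0 h1 (cosA c1 c3)
    have c33' : 0 < Real.cos (3 * (11 * z)) := by
      rw [show (3 : ℝ) * (11 * z) = 33 * z by ring]; exact c33
    have h11 : Real.sqrt 3 / 2 < Real.cos (11 * z) := cosA c11 c33'
    have h11' : 11 * z < π / 6 := by
      rcases le_or_gt (11 * z) π with h | h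
      · exact cosB (by positivity) h h11
      · exfalso
        have hw0 : 0 ≤ 2 * π - 11 * z := by linarith
        have hwπ : 2 * π - 11 * z ≤ π := by linarith
        have he : Real.cos (2 * π - 11 * z) = Real.cos (11 * z) :=
          Real.cos_two_pi_sub _
        have := cosB hw0 hwπ (by rw [he]; exact h11)
        linarith
    linarith
  · intro h
    refine ⟨?_, ?_, ?_, ?_⟩ <;>
      exact Real.cos_pos_of_mem_Ioo ⟨by linarith, by linarith⟩

lemma core2 (z : ℝ) (h0 : 0 ≤ z) (h1 : z ≤ π) :
    (0 < Real.cos z ∧ 0 < Real.cos (3 * z) ∧ 0 < Real.cos (9 * z) ∧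
      0 < Real.cos (27 * z)) ↔ z < π / 54 := by
  have hπ := Real.pi_pos
  constructor
  · rintro ⟨c1, c3, c9, c27⟩
    have hz6 : z < π / 6 := cosB h0 h1 (cosA c1 c3)
    have c9' : 0 < Real.cos (3 * (3 * z)) := by
      rw [show (3 : ℝ) * (3 * z) = 9 * z by ring]; exact c9
    have h3 : 3 * z < π / 6 :=
      cosB (by positivity) (by linarith) (cosA c3 c9')
    have c27' : 0 < Real.cos (3 * (9 * z)) := by
      rw [show (3 : ℝ) * (9 * z) = 27 * z by ring]; exact c27
    have h9 : 9 * z < π / 6 :=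
      cosB (by positivity) (by linarith) (cosA c9 c27')
    linarith
  · intro h
    refine ⟨?_, ?_, ?_, ?_⟩ <;>
      exact Real.cos_pos_of_mem_Ioo ⟨by linarith, by linarith⟩

lemma key (a : Fin 4 → ℕ) (hodd : ∀ i, Odd (a i)) (ε : ℝ) (hε0 : 0 < ε) (hε : ε ≤ π / 2)
    (core : ∀ z, 0 ≤ z → z ≤ π → ((∀ i, 0 < Real.cos (a i * z)) ↔ z < ε)) :
    {x : ℝ | x ∈ Icc 0 (2 * π) ∧
        ((∀ i, 0 < Real.cos (a i * x)) ∨ (∀ i, Real.cos (a i * x) < 0))}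
      = Ico 0 ε ∪ Ioo (π - ε) (π + ε) ∪ Ioc (2 * π - ε) (2 * π) := by
  have hπ := Real.pi_pos
  ext x
  simp only [mem_setOf_eq, mem_Icc, mem_union, mem_Ico, mem_Ioo, mem_Ioc]
  constructor
  · rintro ⟨⟨hx0, hx2⟩, hpos | hneg⟩
    · rcases le_or_gt x π with h | h
      · exact Or.inl (Or.inl ⟨hx0, (core x hx0 h).1 hpos⟩)
      · have hy0 : 0 ≤ 2 * π - x := by linarith
        have hyπ : 2 * π - x ≤ π := by linarith
        have hy : 2 * π - x < ε := (core _ hy0 hyπ).1 fun i => by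
          rw [cos_nat_two_pi_sub]; exact hpos i
        exact Or.inr ⟨by linarith, hx2⟩
    · have key2 : ∀ i, 0 < Real.cos (a i * (x - π)) := fun i => by
        have h := cos_odd_pi_add (a i) (hodd i) (x - π)
        rw [show π + (x - π) = x by ring] at h
        have := hneg i; linarith
      rcases le_or_gt π x with h | h
      · have := (core (x - π) (by linarith) (by linarith)).1 key2
        exact Or.inl (Or.inr ⟨by linarith, by linarith⟩)
      · have key3 : ∀ i, 0 < Real.cos (a i * (π - x)) := fun i => by
          have he : (a i : ℝ) * (π - x) = -((a i) * (x - π)) := by ring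
          rw [he, Real.cos_neg]; exact key2 i
        have := (core (π - x) (by linarith) (by linarith)).1 key3
        exact Or.inl (Or.inr ⟨by linarith, by linarith⟩)
  · rintro ((⟨h0, h1⟩ | ⟨h0, h1⟩) | ⟨h0, h1⟩)
    · exact ⟨⟨h0, by linarith⟩, Or.inl ((core x h0 (by linarith)).2 h1)⟩
    · refine ⟨⟨by linarith, by linarith⟩, Or.inr fun i => ?_⟩
      have h := cos_odd_pi_add (a i) (hodd i) (x - π)
      rw [show π + (x - π) = x by ring] at h
      rw [h, neg_lt_zero]
      rcases le_or_gt π x with hc | hc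
      · exact (core (x - π) (by linarith) (by linarith)).2 (by linarith) i
      · have he : (a i : ℝ) * (x - π) = -((a i) * (π - x)) := by ring
        rw [he, Real.cos_neg]
        exact (core (π - x) (by linarith) (by linarith)).2 (by linarith) i
    · refine ⟨⟨by linarith, h1⟩, Or.inl fun i => ?_⟩
      have := (core (2 * π - x) (by linarith) (by linarith)).2 (by linarith) i
      rwa [cos_nat_two_pi_sub] at this

lemma vol4 (ε : ℝ) (hε0 : 0 < ε) (hε : ε ≤ π / 2) :
    (volume (Ico (0 : ℝ) ε ∪ Ioo (π - ε) (π + ε) ∪ Ioc (2 * π - ε) (2 * π))).toReal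
      = 4 * ε := by
  have hπ := Real.pi_pos
  have d1 : Disjoint (Ico (0 : ℝ) ε) (Ioo (π - ε) (π + ε)) := by
    rw [Set.disjoint_left]
    intro x hx hy
    simp only [mem_Ico, mem_Ioo] at hx hy
    linarith [hx.2, hy.1]
  have d2 : Disjoint (Ico (0 : ℝ) ε ∪ Ioo (π - ε) (π + ε)) (Ioc (2 * π - ε) (2 * π)) := by
    rw [Set.disjoint_left]
    rintro x (hx | hx) hy
    · simp only [mem_Ico] at hx
      simp only [mem_Ioc] at hy
      linarith [hx.2, hy.1]
    · simp only [mem_Ioo] at hx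
      simp only [mem_Ioc] at hy
      linarith [hx.2, hy.1]
  rw [measure_union d2 measurableSet_Ioc, measure_union d1 measurableSet_Ioo,
    Real.volume_Ico, Real.volume_Ioo, Real.volume_Ioc,
    ← ENNReal.ofReal_add (by linarith) (by linarith),
    ← ENNReal.ofReal_add (by linarith) (by linarith),
    ENNReal.toReal_ofReal (by linarith)]
  ring

lemma bridge1 : ∀ z : ℝ, 0 ≤ z → z ≤ π →
    ((∀ i, 0 < Real.cos ((![1, 3, 11, 33] : Fin 4 → ℕ) i * z)) ↔ z < π / 66) := by
  intro z h0 h1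
  rw [show (∀ i, 0 < Real.cos ((![1, 3, 11, 33] : Fin 4 → ℕ) i * z)) ↔
      (0 < Real.cos z ∧ 0 < Real.cos (3 * z) ∧ 0 < Real.cos (11 * z) ∧
        0 < Real.cos (33 * z)) from ?_]
  · exact core1 z h0 h1
  constructor
  · intro h
    refine ⟨by simpa using h 0, by simpa using h 1, by simpa using h 2, by simpa using h 3⟩
  · rintro ⟨h1, h2, h3, h4⟩ i
    fin_cases i <;> simpa

lemma bridge2 : ∀ z : ℝ, 0 ≤ z → z ≤ π →
    ((∀ i, 0 < Real.cos ((![1, 3, 9, 27] : Fin 4 → ℕ) i * z)) ↔ z < π / 54) := by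
  intro z h0 h1
  rw [show (∀ i, 0 < Real.cos ((![1, 3, 9, 27] : Fin 4 → ℕ) i * z)) ↔
      (0 < Real.cos z ∧ 0 < Real.cos (3 * z) ∧ 0 < Real.cos (9 * z) ∧
        0 < Real.cos (27 * z)) from ?_]
  · exact core2 z h0 h1
  constructor
  · intro h
    refine ⟨by simpa using h 0, by simpa using h 1, by simpa using h 2, by simpa using h 3⟩
  · rintro ⟨h1, h2, h3, h4⟩ i
    fin_cases i <;> simpa

lemma cosP1 : cosP 4 ![1, 3, 11, 33] = 1 / 33 := by
  have hπ := Real.pi_pos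
  have hε0 : (0 : ℝ) < π / 66 := by linarith
  have hε : π / 66 ≤ π / 2 := by linarith
  unfold cosP
  rw [key ![1, 3, 11, 33] (by decide) (π / 66) hε0 hε bridge1, vol4 _ hε0 hε]
  field_simp
  ring

lemma cosP2 : cosP 4 ![1, 3, 9, 27] = 1 / 27 := by
  have hπ := Real.pi_pos
  have hε0 : (0 : ℝ) < π / 54 := by linarith
  have hε : π / 54 ≤ π / 2 := by linarith
  unfold cosP
  rw [key ![1, 3, 9, 27] (by decide) (π / 54) hε0 hε bridge2, vol4 _ hε0 hε]
  field_simp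
  ring

theorem stmt_19 :
    cosP 4 ![1, 3, 11, 33] = 1 / 33 ∧ cosP 4 ![1, 3, 9, 27] = 1 / 27 ∧
      cosP 4 ![1, 3, 11, 33] < cosP 4 ![1, 3, 9, 27] := by
  refine ⟨cosP1, cosP2, ?_⟩
  rw [cosP1, cosP2]
  norm_num
end
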